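/- arXiv:1305.3629 — 7 statements merged into one kernel-verified Lean document; each statement's English description precedes it below -/
import Mathlib

section
/- Let θ be a regular cardinal, μ < θ a cardinal, and m < ω. If for each i < μ, X_i is a set of ordinals with otp(X_i) < θ^m (ordinal exponentiation), then the union X = ⋃_{i<μ} X_i satisfies otp(X) < θ^m. -/
open Ordinal Set

/-- The order type of a set of ordinals. -/
noncomputable def otp (X : Set Ordinal) : Ordinal.{1} :=
  Ordinal.type ((· < ·) : X → X → Prop)

open scoped Classical in
noncomputable def rnk (X : Set Ordinal) (x : Ordinal) : Ordinal.{1} :=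
  if h : x ∈ X then Ordinal.typein ((· < ·) : X → X → Prop) ⟨x, h⟩ else 0

theorem rnk_lt_otp {X : Set Ordinal} {x : Ordinal} (h : x ∈ X) : rnk X x < otp X := by
  rw [rnk, dif_pos h]
  exact Ordinal.typein_lt_type _ _

theorem rnk_lt_rnk {X : Set Ordinal} {x y : Ordinal} (hx : x ∈ X) (hy : y ∈ X) :
    rnk X x < rnk X y ↔ x < y := by
  rw [rnk, dif_pos hx, rnk, dif_pos hy]
  exact Ordinal.typein_lt_typein _

theorem rnk_inj {X : Set Ordinal} {x y : Ordinal} (hx : x ∈ X) (hy : y ∈ X)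
    (h : rnk X x = rnk X y) : x = y := by
  rw [rnk, dif_pos hx, rnk, dif_pos hy] at h
  have := Ordinal.typein_injective ((· < ·) : X → X → Prop) h
  exact congrArg Subtype.val this

theorem exists_rnk_eq {X : Set Ordinal} {v : Ordinal.{1}} (h : v < otp X) :
    ∃ x ∈ X, rnk X x = v := by
  obtain ⟨a, ha⟩ := Ordinal.typein_surj ((· < ·) : X → X → Prop) h
  exact ⟨a.1, a.2, by rw [rnk, dif_pos a.2]; exact ha⟩

theorem otp_Iio (b : Ordinal.{0}) : otp (Set.Iio b) = Ordinal.lift.{1,0} b := by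
  have e : ((· < ·) : (Set.Iio b) → (Set.Iio b) → Prop)
      ≃r Subrel ((· < ·) : Ordinal → Ordinal → Prop) {c | c < b} :=
    ⟨Equiv.refl _, Iff.rfl⟩
  rw [otp]; exact Ordinal.type_lt_Iio b

theorem otp_mono {X Y : Set Ordinal} (h : X ⊆ Y) : otp X ≤ otp Y := by
  have f : ((· < ·) : X → X → Prop) ↪r ((· < ·) : Y → Y → Prop) :=
    RelEmbedding.ofMonotone (fun a => ⟨a.1, h a.2⟩) (fun _ _ hab => hab)
  exact f.ordinal_type_le

theorem otp_le_lift {X : Set Ordinal} {b : Ordinal} (h : X ⊆ Set.Iio b) :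
    otp X ≤ Ordinal.lift.{1,0} b :=
  (otp_mono h).trans_eq (otp_Iio b)

theorem lift_le_otp {X : Set Ordinal} {b : Ordinal} (f : Ordinal → Ordinal)
    (hf : ∀ v < b, f v ∈ X) (hmono : ∀ v w, v < w → w < b → f v < f w) :
    Ordinal.lift.{1,0} b ≤ otp X := by
  rw [← otp_Iio b]
  have e : ((· < ·) : Set.Iio b → Set.Iio b → Prop) ↪r ((· < ·) : X → X → Prop) :=
    RelEmbedding.ofMonotone (fun v => ⟨f v.1, hf v.1 v.2⟩)
      (fun v w h => hmono _ _ h w.2)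
  exact e.ordinal_type_le

theorem lift_le_otp_of_unbounded {θ : Cardinal} (hθ : θ.IsRegular) {F : Set Ordinal}
    (hF : F ⊆ Set.Iio θ.ord) (hub : ∀ β < θ.ord, ∃ ξ ∈ F, β ≤ ξ) :
    Ordinal.lift.{1,0} θ.ord ≤ otp F := by
  by_contra h
  push_neg at h
  obtain ⟨γ, hγ, hγ2⟩ := Ordinal.lt_lift_iff.1 h
  have hch : ∀ v : Ordinal, ∃ x, v < γ → x ∈ F ∧ rnk F x = Ordinal.lift.{1,0} v := by
    intro v
    by_cases hv : v < γ
    · obtain ⟨x, hx, hrx⟩ := exists_rnk_eq (X := F) (v := Ordinal.lift.{1,0} v)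
        (by rw [← hγ2]; exact Ordinal.lift_lt.2 hv)
      exact ⟨x, fun _ => ⟨hx, hrx⟩⟩
    · exact ⟨0, fun hv' => absurd hv' hv⟩
  choose g hg using hch
  have hlim := Cardinal.isSuccLimit_ord hθ.aleph0_le
  have hσ : Ordinal.bsup γ (fun v _ => g v) < θ.ord := by
    apply Cardinal.bsup_lt_ord_of_isRegular hθ (Cardinal.lt_ord.1 hγ)
    intro v hv
    exact hF (hg v hv).1
  set σ := Ordinal.bsup γ (fun v _ => g v) with hσdef
  obtain ⟨ξ, hξF, hξge⟩ := hub (σ + 1) (by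
    rw [Ordinal.add_one_eq_succ]; exact hlim.succ_lt hσ)
  have hrξ : rnk F ξ < Ordinal.lift.{1,0} γ := by rw [hγ2]; exact rnk_lt_otp hξF
  obtain ⟨v, hvγ, hv2⟩ := Ordinal.lt_lift_iff.1 hrξ
  have hgv : g v = ξ := rnk_inj (hg v hvγ).1 hξF (by rw [(hg v hvγ).2, hv2])
  have hle : ξ ≤ σ := hgv ▸ Ordinal.le_bsup (fun v _ => g v) v hvγ
  have hcon : σ + 1 ≤ σ := hξge.trans hle
  rw [Ordinal.add_one_eq_succ, Order.succ_le_iff] at hcon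
  exact lt_irrefl _ hcon

theorem key (θ μ : Cardinal) (hθ : θ.IsRegular) (hμ : μ < θ) :
    ∀ (m : ℕ) (X : Ordinal → Set Ordinal),
      (∀ i < μ.ord, otp (X i) < Ordinal.lift.{1,0} (θ.ord ^ m)) →
      otp (⋃ i ∈ Set.Iio μ.ord, X i) < Ordinal.lift.{1,0} (θ.ord ^ m) := by
  intro m
  induction m with
  | zero =>
    intro X hX
    have hempty : (⋃ i ∈ Set.Iio μ.ord, X i) = ∅ := by
      apply Set.eq_empty_iff_forall_notMem.2
      intro x hx
      obtain ⟨i, hi, hxi⟩ := Set.mem_iUnion₂.1 hx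
      have hx0 := hX i hi
      rw [pow_zero, Ordinal.lift_one, Ordinal.lt_one_iff_zero] at hx0
      have hxlt := rnk_lt_otp hxi
      rw [hx0] at hxlt
      exact absurd hxlt (not_lt.2 zero_le)
    rw [hempty]
    have h0 : otp (∅ : Set Ordinal) = 0 := by
      rw [otp, Ordinal.type_eq_zero_iff_isEmpty]
      exact ⟨fun x => x.2⟩
    rw [h0, pow_zero, Ordinal.lift_one]
    exact zero_lt_one
  | succ m ih =>
    intro X hX
    by_contra hU'
    push_neg at hU'
    set U := ⋃ i ∈ Set.Iio μ.ord, X i with hUdef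
    set P := θ.ord ^ m with hPdef
    have hθ0 : (0 : Ordinal) < θ.ord := Cardinal.lt_ord.2 (by simpa using hθ.pos)
    have hP0 : P ≠ 0 := by
      rw [hPdef, ← Ordinal.opow_natCast]
      exact (Ordinal.opow_pos _ hθ0).ne'
    have hlim := Cardinal.isSuccLimit_ord hθ.aleph0_le
    have hpow : θ.ord ^ (m + 1) = P * θ.ord := pow_succ _ _
    set Z : Ordinal → Set Ordinal := fun ξ =>
      {x | x ∈ U ∧ Ordinal.lift.{1,0} (P * ξ) ≤ rnk U x ∧
        rnk U x < Ordinal.lift.{1,0} (P * (ξ + 1))} with hZdef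
    -- (A)
    have main : ∀ ξ < θ.ord, ∃ i < μ.ord, Ordinal.lift.{1,0} P ≤ otp (X i ∩ Z ξ) := by
      intro ξ hξ
      by_contra hno
      push_neg at hno
      have hIH := ih (fun i => X i ∩ Z ξ) (fun i hi => hno i hi)
      have hZU : (⋃ i ∈ Set.Iio μ.ord, X i ∩ Z ξ) = Z ξ := by
        ext x
        constructor
        · intro hx
          obtain ⟨i, hi, hxi⟩ := Set.mem_iUnion₂.1 hx
          exact hxi.2
        · intro hx
          obtain ⟨i, hi, hxi⟩ := Set.mem_iUnion₂.1 hx.1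
          exact Set.mem_iUnion₂.2 ⟨i, hi, hxi, hx⟩
      rw [hZU] at hIH
      have hξ1 : ξ + 1 ≤ θ.ord := by
        rw [Ordinal.add_one_eq_succ]
        exact (hlim.succ_lt hξ).le
      have hle2 : P * (ξ + 1) ≤ θ.ord ^ (m + 1) := by
        rw [hpow]; exact mul_le_mul_right hξ1 P
      have hch : ∀ v, ∃ x, v < P → x ∈ U ∧ rnk U x = Ordinal.lift.{1,0} (P * ξ + v) := by
        intro v
        by_cases hv : v < P
        · have hlt : Ordinal.lift.{1,0} (P * ξ + v) < otp U := by
            refine lt_of_lt_of_le (Ordinal.lift_lt.2 ?_) ((Ordinal.lift_le.2 hle2).trans hU')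
            calc P * ξ + v < P * ξ + P := (add_lt_add_iff_left _).2 hv
              _ = P * (ξ + 1) := by rw [mul_add, mul_one]
          obtain ⟨x, hx, hr⟩ := exists_rnk_eq hlt
          exact ⟨x, fun _ => ⟨hx, hr⟩⟩
        · exact ⟨0, fun h => absurd h hv⟩
      choose f hf using hch
      have hlow : Ordinal.lift.{1,0} P ≤ otp (Z ξ) := by
        apply lift_le_otp f
        · intro v hv
          refine ⟨(hf v hv).1, ?_, ?_⟩
          · rw [(hf v hv).2]
            exact Ordinal.lift_le.2 le_self_add
          · rw [(hf v hv).2]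
            refine Ordinal.lift_lt.2 ?_
            calc P * ξ + v < P * ξ + P := (add_lt_add_iff_left _).2 hv
              _ = P * (ξ + 1) := by rw [mul_add, mul_one]
        · intro v w hvw hw
          rw [← rnk_lt_rnk (hf v (hvw.trans hw)).1 (hf w hw).1,
            (hf v (hvw.trans hw)).2, (hf w hw).2]
          exact Ordinal.lift_lt.2 ((add_lt_add_iff_left _).2 hvw)
      exact absurd hIH (not_lt.2 hlow)
    -- (B) choice
    have hA : ∀ ξ, ∃ i, ξ < θ.ord →
        (i < μ.ord ∧ Ordinal.lift.{1,0} P ≤ otp (X i ∩ Z ξ)) := by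
      intro ξ
      by_cases hξ : ξ < θ.ord
      · obtain ⟨i, hi, h2⟩ := main ξ hξ
        exact ⟨i, fun _ => ⟨hi, h2⟩⟩
      · exact ⟨0, fun h => absurd h hξ⟩
    choose c hc using hA
    -- (C) pigeonhole
    have hpig : ∃ i < μ.ord, ∀ β < θ.ord, ∃ ξ, β ≤ ξ ∧ ξ < θ.ord ∧ c ξ = i := by
      by_contra hno
      push_neg at hno
      have hch2 : ∀ i, ∃ β, i < μ.ord →
          (β < θ.ord ∧ ∀ ξ, β ≤ ξ → ξ < θ.ord → c ξ ≠ i) := by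
        intro i
        by_cases hi : i < μ.ord
        · obtain ⟨β, hβ, hβ2⟩ := hno i hi
          exact ⟨β, fun _ => ⟨hβ, hβ2⟩⟩
        · exact ⟨0, fun h => absurd h hi⟩
      choose g hg using hch2
      have hσ : Ordinal.bsup μ.ord (fun i _ => g i) < θ.ord := by
        apply Cardinal.bsup_lt_ord_of_isRegular hθ (by rw [Cardinal.card_ord]; exact hμ)
        intro i hi
        exact (hg i hi).1
      set σ := Ordinal.bsup μ.ord (fun i _ => g i) with hσdef
      have hcσ := hc σ hσ
      exact (hg (c σ) hcσ.1).2 σ (Ordinal.le_bsup _ (c σ) hcσ.1) hσ rfl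
    obtain ⟨i, hiμ, hiub⟩ := hpig
    set F : Set Ordinal := {ξ | ξ < θ.ord ∧ c ξ = i} with hFdef
    have hFsub : F ⊆ Set.Iio θ.ord := fun ξ h => h.1
    have hFub : ∀ β < θ.ord, ∃ ξ ∈ F, β ≤ ξ := by
      intro β hβ
      obtain ⟨ξ, h1, h2, h3⟩ := hiub β hβ
      exact ⟨ξ, ⟨h2, h3⟩, h1⟩
    have hFotp := lift_le_otp_of_unbounded hθ hFsub hFub
    -- (D)
    have hfinal : Ordinal.lift.{1,0} (θ.ord ^ (m + 1)) ≤ otp (X i) := by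
      rw [hpow, Ordinal.lift_mul]
      apply (Ordinal.mul_le_iff_of_isSuccLimit (Ordinal.isSuccLimit_lift.2 hlim)).2
      intro c' hc'
      obtain ⟨η, hη, rfl⟩ := Ordinal.lt_lift_iff.1 hc'
      rw [← Ordinal.lift_mul]
      have hch3 : ∀ q, ∃ ξ, q < η → ξ ∈ F ∧ rnk F ξ = Ordinal.lift.{1,0} q := by
        intro q
        by_cases hq : q < η
        · have hlt : Ordinal.lift.{1,0} q < otp F :=
            lt_of_lt_of_le (Ordinal.lift_lt.2 (hq.trans hη)) hFotp
          obtain ⟨ξ, hξ, hr⟩ := exists_rnk_eq hlt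
          exact ⟨ξ, fun _ => ⟨hξ, hr⟩⟩
        · exact ⟨0, fun h => absurd h hq⟩
      choose e he using hch3
      have hch4 : ∀ v, ∃ x, v < P * η →
          x ∈ X i ∩ Z (e (v / P)) ∧
          rnk (X i ∩ Z (e (v / P))) x = Ordinal.lift.{1,0} (v % P) := by
        intro v
        by_cases hv : v < P * η
        · have hq : v / P < η := (Ordinal.div_lt hP0).2 hv
          have heF := he (v / P) hq
          have hblock : Ordinal.lift.{1,0} P ≤ otp (X i ∩ Z (e (v / P))) := by
            have h2 := (hc (e (v / P)) heF.1.1).2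
            rwa [heF.1.2] at h2
          have hlt : Ordinal.lift.{1,0} (v % P) < otp (X i ∩ Z (e (v / P))) :=
            lt_of_lt_of_le (Ordinal.lift_lt.2 (Ordinal.mod_lt v hP0)) hblock
          obtain ⟨x, hx, hr⟩ := exists_rnk_eq hlt
          exact ⟨x, fun _ => ⟨hx, hr⟩⟩
        · exact ⟨0, fun h => absurd h hv⟩
      choose h hh using hch4
      apply lift_le_otp h
      · intro v hv
        exact ((hh v hv).1).1
      · intro v w hvw hw
        have hv := hvw.trans hw
        have h1 := hh v hv
        have h2 := hh w hw
        by_cases hq : v / P = w / P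
        · have hmod : v % P < w % P := by
            have e1 := Ordinal.div_add_mod v P
            have e2 := Ordinal.div_add_mod w P
            have : P * (v / P) + v % P < P * (v / P) + w % P := by
              rw [e1, hq, e2]
              exact hvw
            exact (add_lt_add_iff_left _).1 this
          have h1' := h1
          rw [hq] at h1'
          refine (rnk_lt_rnk h1'.1 h2.1).1 ?_
          rw [h1'.2, h2.2]
          exact Ordinal.lift_lt.2 hmod
        · have hqle : v / P ≤ w / P := Ordinal.div_le_left hvw.le P
          have hqlt : v / P < w / P := lt_of_le_of_ne hqle hq
          have hev := he (v / P) ((Ordinal.div_lt hP0).2 hv)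
          have hew := he (w / P) ((Ordinal.div_lt hP0).2 hw)
          have helt : e (v / P) < e (w / P) := by
            refine (rnk_lt_rnk hev.1 hew.1).1 ?_
            rw [hev.2, hew.2]
            exact Ordinal.lift_lt.2 hqlt
          have hsucc : e (v / P) + 1 ≤ e (w / P) := by
            rw [Ordinal.add_one_eq_succ]
            exact Order.succ_le_of_lt helt
          have hZv := (h1.1).2
          have hZw := (h2.1).2
          refine (rnk_lt_rnk hZv.1 hZw.1).1 ?_
          refine lt_of_lt_of_le hZv.2.2 (le_trans ?_ hZw.2.1)
          exact Ordinal.lift_le.2 (mul_le_mul_right hsucc P)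
    exact absurd (hX i hiμ) (not_lt.2 hfinal)

/-- Let `θ` be a regular cardinal, `μ < θ` a cardinal and `m < ω`. If, for each `i < μ`,
`X i` is a set of ordinals with `otp (X i) < θ ^ m` (ordinal exponentiation),
then the union `⋃_{i < μ} X i` also has order type `< θ ^ m`. -/
theorem stmt_0 (θ μ : Cardinal) (hθ : θ.IsRegular) (hμ : μ < θ) (m : ℕ)
    (X : Ordinal → Set Ordinal)
    (hX : ∀ i < μ.ord, otp (X i) < Ordinal.lift.{1,0} (θ.ord ^ m)) :
    otp (⋃ i ∈ Set.Iio μ.ord, X i) < Ordinal.lift.{1,0} (θ.ord ^ m) :=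
  key θ μ hθ hμ m X hX
end

section
/- Let θ < λ be regular cardinals and 𝒟 a transitive θ-covering matrix for λ. Then S(𝒟) implies CP(𝒟). -/
/-- `δ` is an accumulation (limit) point of the set `C` of ordinals. -/
def IsAcc (C : Set Ordinal) (δ : Ordinal) : Prop :=
  0 < δ ∧ ∀ γ < δ, ∃ x ∈ C, γ < x ∧ x < δ

/-- `C` is club in `α`. -/
def IsClubIn (C : Set Ordinal) (α : Ordinal) : Prop :=
  (∀ x ∈ C, x < α) ∧ (∀ γ < α, ∃ x ∈ C, γ ≤ x) ∧ (∀ δ < α, IsAcc C δ → δ ∈ C)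

/-- `S` is stationary in `α`. -/
def IsStationaryIn (S : Set Ordinal) (α : Ordinal) : Prop :=
  ∀ C, IsClubIn C α → (S ∩ C).Nonempty

/-- A `θ`-covering matrix for `lam` (both viewed as ordinals). -/
structure CovMatrix (θ lam : Ordinal) where
  D : Ordinal → Ordinal → Set Ordinal
  union_eq : ∀ β < lam, (⋃ i ∈ Set.Iio θ, D i β) = Set.Iio β
  mono : ∀ β < lam, ∀ i j, i < j → j < θ → D i β ⊆ D j β
  cover : ∀ β γ, β < γ → γ < lam → ∀ i < θ, ∃ j < θ, D i β ⊆ D j γ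

/-- The covering matrix is transitive. -/
def CovMatrix.Transitive {θ lam : Ordinal} (M : CovMatrix θ lam) : Prop :=
  ∀ i < θ, ∀ α β, β < lam → α ∈ M.D i β → M.D i α ⊆ M.D i β

/-- `CP(𝒟)`: there is an unbounded `T ⊆ lam` such that every subset of `T` of
size `θ` is covered by some entry of the matrix. -/
def CovMatrix.CP (θc : Cardinal) {θ lam : Ordinal} (M : CovMatrix θ lam) : Prop :=
  ∃ T ⊆ Set.Iio lam, (∀ γ < lam, ∃ x ∈ T, γ ≤ x) ∧
    ∀ X ⊆ T, Cardinal.mk X = Cardinal.lift.{1,0} θc →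
      ∃ i < θ, ∃ β < lam, X ⊆ M.D i β

/-- `S(𝒟)`: there is a stationary `S ⊆ lam` such that every `θ`-family of
stationary subsets of `S` is simultaneously met by a single entry of the matrix. -/
def CovMatrix.Sprop {θ lam : Ordinal} (M : CovMatrix θ lam) : Prop :=
  ∃ S ⊆ Set.Iio lam, IsStationaryIn S lam ∧
    ∀ Sj : Ordinal → Set Ordinal,
      (∀ j < θ, Sj j ⊆ S ∧ IsStationaryIn (Sj j) lam) →
      ∃ i < θ, ∃ β < lam, ∀ j < θ, (Sj j ∩ M.D i β).Nonempty

/-- Intersection of fewer than `cof Λ` many clubs in `Λ` is club in `Λ`,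
provided `ℵ₀ < cof Λ`. -/
lemma isClubIn_iInter {Λ : Ordinal.{0}} (hL : Order.IsSuccLimit Λ) (hcof : Cardinal.aleph0 < Λ.cof)
    {o : Ordinal} (ho : 0 < o) (hoc : o.card < Λ.cof)
    (C : ∀ i, i < o → Set Ordinal) (hC : ∀ i hi, IsClubIn (C i hi) Λ) :
    IsClubIn {x | ∀ i (hi : i < o), x ∈ C i hi} Λ := by
  refine ⟨fun x hx => (hC 0 ho).1 x (hx 0 ho), ?_, ?_⟩
  · -- unboundedness
    intro γ0 hγ0
    -- one step: jump above γ into all clubs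
    have step : ∀ γ, γ < Λ → ∃ δ, γ < δ ∧ δ < Λ ∧
        ∀ i (hi : i < o), ∃ x, x ∈ C i hi ∧ γ < x ∧ x ≤ δ := by
      intro γ hγ
      have pick : ∀ i (hi : i < o), ∃ x, x ∈ C i hi ∧ Order.succ γ ≤ x := by
        intro i hi
        obtain ⟨x, hx, hgx⟩ := (hC i hi).2.1 (Order.succ γ)
          (hL.succ_lt_iff.2 hγ)
        exact ⟨x, hx, hgx⟩
      choose g hg hg' using pick
      refine ⟨Ordinal.bsup o g, ?_, ?_, ?_⟩
      · exact lt_of_lt_of_le (lt_of_lt_of_le (Order.lt_succ γ) (hg' 0 ho))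
          (Ordinal.le_bsup g 0 ho)
      · exact Ordinal.bsup_lt_ord hoc (fun i hi => (hC i hi).1 _ (hg i hi))
      · intro i hi
        exact ⟨g i hi, hg i hi, lt_of_lt_of_le (Order.lt_succ γ) (hg' i hi),
          Ordinal.le_bsup g i hi⟩
    choose f hf1 hf2 hf3 using step
    -- the ω-iteration
    let E : ℕ → {p : Ordinal // p < Λ} := fun n =>
      Nat.rec ⟨γ0, hγ0⟩ (fun _ p => ⟨f p.1 p.2, hf2 p.1 p.2⟩) n
    let e : ℕ → Ordinal := fun n => (E n).1
    have heE : ∀ n, e (n + 1) = f (e n) (E n).2 := fun n => rfl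
    have hmono : ∀ n, e n < e (n + 1) := by
      intro n; rw [heE]; exact hf1 _ _
    have hbdd : BddAbove (Set.range e) := by
      refine ⟨Λ, ?_⟩
      rintro y ⟨n, rfl⟩
      exact (E n).2.le
    set δ := ⨆ n, e n with hδ
    have hle : ∀ n, e n ≤ δ := fun n => le_ciSup hbdd n
    have hlt : ∀ n, e n < δ := fun n => lt_of_lt_of_le (hmono n) (hle (n + 1))
    have hδΛ : δ < Λ := by
      have hlt' : ∀ n, e n < Λ := fun n => (E n).2
      exact Ordinal.iSup_lt_of_lt_cof (a := Λ) (f := e) (by rw [Cardinal.mk_nat]; exact hcof) hlt'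
    have hδmem : ∀ i (hi : i < o), δ ∈ C i hi := by
      intro i hi
      refine (hC i hi).2.2 δ hδΛ ⟨lt_of_le_of_lt (zero_le (a := e 0)) (hlt 0), ?_⟩
      intro γ' hγ'
      obtain ⟨n, hn⟩ := (lt_ciSup_iff hbdd).1 hγ'
      obtain ⟨x, hxC, hx1, hx2⟩ := hf3 (e n) (E n).2 i hi
      refine ⟨x, hxC, lt_trans hn hx1, ?_⟩
      calc x ≤ e (n + 1) := by rw [heE]; exact hx2
        _ < δ := hlt (n + 1)
    exact ⟨δ, hδmem, (hlt 0).le⟩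
  · -- closedness
    intro δ hδ hacc
    intro i hi
    refine (hC i hi).2.2 δ hδ ⟨hacc.1, ?_⟩
    intro γ hγ
    obtain ⟨x, hx, h1, h2⟩ := hacc.2 γ hγ
    exact ⟨x, hx i hi, h1, h2⟩

/-- Intersecting a club with a tail keeps it club. -/
lemma isClubIn_tail {Λ : Ordinal} (hL : Order.IsSuccLimit Λ) {C : Set Ordinal}
    (hC : IsClubIn C Λ) {β : Ordinal} (hβ : β < Λ) :
    IsClubIn {x | x ∈ C ∧ β < x} Λ := by
  refine ⟨fun x hx => hC.1 x hx.1, ?_, ?_⟩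
  · intro γ hγ
    obtain ⟨x, hx, hgx⟩ := hC.2.1 (max γ (Order.succ β))
      (max_lt hγ (hL.succ_lt_iff.2 hβ))
    exact ⟨x, ⟨hx, lt_of_lt_of_le (Order.lt_succ β) (le_trans (le_max_right _ _) hgx)⟩,
      le_trans (le_max_left _ _) hgx⟩
  · intro δ hδ hacc
    have hC' : δ ∈ C := by
      refine hC.2.2 δ hδ ⟨hacc.1, ?_⟩
      intro γ hγ
      obtain ⟨x, hx, h1, h2⟩ := hacc.2 γ hγ
      exact ⟨x, hx.1, h1, h2⟩
    obtain ⟨x, hx, _, h2⟩ := hacc.2 0 hacc.1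
    exact ⟨hC', lt_trans hx.2 h2⟩

/-- Weak monotonicity of a covering matrix. -/
lemma CovMatrix.mono_le {θo lamo : Ordinal} (M : CovMatrix θo lamo) {β : Ordinal}
    (hβ : β < lamo) {i j : Ordinal} (hij : i ≤ j) (hj : j < θo) :
    M.D i β ⊆ M.D j β := by
  rcases lt_or_eq_of_le hij with h | h
  · exact M.mono β hβ i j h hj
  · rw [h]

/-- For regular cardinals `θ < lam` and a transitive `θ`-covering matrix `𝒟`
for `lam`, `S(𝒟)` implies `CP(𝒟)`. -/
theorem stmt_4 (θ lam : Cardinal) (hθ : θ.IsRegular) (hlam : lam.IsRegular)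
    (hlt : θ < lam) (M : CovMatrix θ.ord lam.ord) (htr : M.Transitive)
    (hS : M.Sprop) : M.CP θ := by
  obtain ⟨S, hSsub, hSstat, hSmeet⟩ := hS
  have hcof0 : lam.ord.cof = lam := hlam.cof_eq
  have hL : Order.IsSuccLimit lam.ord := Cardinal.isSuccLimit_ord hlam.1
  have hω : Cardinal.aleph0 < lam.ord.cof := by
    rw [hcof0]; exact lt_of_le_of_lt hθ.1 hlt
  have hcard0 : θ.ord.card < lam.ord.cof := by
    rw [hcof0, Cardinal.card_ord]; exact hlt
  have hpos0 : (0 : Ordinal) < θ.ord := by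
    rw [← Cardinal.ord_zero]
    exact Cardinal.ord_lt_ord.2 (lt_of_lt_of_le Cardinal.aleph0_pos hθ.1)
  have hordlt : θ.ord < lam.ord := Cardinal.ord_lt_ord.2 hlt
  -- Claim 1: for each β' < lam.ord there is i < θ.ord such that
  -- {γ ∈ S | β' ∈ D i γ} is stationary.
  have claim1 : ∀ β' < lam.ord, ∃ i, i < θ.ord ∧
      IsStationaryIn {γ | γ ∈ S ∧ β' ∈ M.D i γ} lam.ord := by
    intro β' hβ'
    by_contra hcon
    push_neg at hcon
    have hK : ∀ i (hi : i < θ.ord), ∃ K, IsClubIn K lam.ord ∧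
        ({γ | γ ∈ S ∧ β' ∈ M.D i γ} ∩ K) = ∅ := by
      intro i hi
      have := hcon i hi
      rw [IsStationaryIn] at this
      push_neg at this
      obtain ⟨K, hK1, hK2⟩ := this
      exact ⟨K, hK1, hK2⟩
    choose K hK1 hK2 using hK
    have hKclub : IsClubIn {x | ∀ i (hi : i < θ.ord), x ∈ K i hi} lam.ord :=
      isClubIn_iInter hL hω hpos0 hcard0 K hK1
    have htail := isClubIn_tail hL hKclub hβ'
    obtain ⟨γ, hγS, hγK, hγβ'⟩ := hSstat _ htail
    have hglt : γ < lam.ord := hSsub hγS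
    have : β' ∈ ⋃ i ∈ Set.Iio θ.ord, M.D i γ := by
      rw [M.union_eq γ hglt]; exact hγβ'
    simp only [Set.mem_iUnion] at this
    obtain ⟨i, hi, hmem⟩ := this
    have : γ ∈ {γ | γ ∈ S ∧ β' ∈ M.D i γ} ∩ K i hi := ⟨⟨hγS, hmem⟩, hγK i hi⟩
    rw [hK2 i hi] at this
    exact this
  -- Claim 2: some i* works on an unbounded set.
  have claim2 : ∃ i', i' < θ.ord ∧ ∀ γ < lam.ord, ∃ x,
      (x < lam.ord ∧ IsStationaryIn {γ | γ ∈ S ∧ x ∈ M.D i' γ} lam.ord) ∧ γ ≤ x := by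
    by_contra hcon
    push_neg at hcon
    have hb : ∀ i (hi : i < θ.ord), ∃ b, b < lam.ord ∧ ∀ x,
        (x < lam.ord ∧ IsStationaryIn {γ | γ ∈ S ∧ x ∈ M.D i γ} lam.ord) → x < b := by
      intro i hi
      obtain ⟨b, hb1, hb2⟩ := hcon i hi
      exact ⟨b, hb1, fun x hx => by
        by_contra h
        exact absurd (hb2 x hx) (not_lt.2 (not_lt.1 h))⟩
    choose b hb1 hb2 using hb
    set B := Ordinal.bsup θ.ord b with hB
    have hBlt : B < lam.ord := Ordinal.bsup_lt_ord hcard0 hb1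
    obtain ⟨i, hi, hstat⟩ := claim1 B hBlt
    have := hb2 i hi B ⟨hBlt, hstat⟩
    exact absurd (Ordinal.le_bsup b i hi) (not_le.2 this)
  obtain ⟨i', hi', hT⟩ := claim2
  -- the unbounded set T
  refine ⟨{x | x < lam.ord ∧ IsStationaryIn {γ | γ ∈ S ∧ x ∈ M.D i' γ} lam.ord},
    fun x hx => hx.1, hT, ?_⟩
  intro X hXT hXcard
  -- enumerate X by Iio θ.ord
  have hcards : Cardinal.mk X = Cardinal.mk (Set.Iio θ.ord) := by
    rw [hXcard, Ordinal.mk_Iio_ordinal, Cardinal.card_ord]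
  obtain ⟨φ⟩ := Cardinal.eq.1 hcards.symm  -- φ : Iio θ.ord ≃ X
  set Sj : Ordinal → Set Ordinal := fun j =>
    if h : j < θ.ord then {γ | γ ∈ S ∧ (φ ⟨j, h⟩ : Ordinal) ∈ M.D i' γ} else ∅ with hSj
  have hSjeq : ∀ (jj : Ordinal) (h : jj < θ.ord),
      Sj jj = {γ | γ ∈ S ∧ (φ ⟨jj, h⟩ : Ordinal) ∈ M.D i' γ} := by
    intro jj h
    rw [hSj]
    exact dif_pos h
  have hSjprop : ∀ j < θ.ord, Sj j ⊆ S ∧ IsStationaryIn (Sj j) lam.ord := by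
    intro j hj
    have hx := hXT (φ ⟨j, hj⟩).2
    rw [hSjeq j hj]
    exact ⟨fun γ hγ => hγ.1, hx.2⟩
  obtain ⟨i, hi, β, hβ, hmeet⟩ := hSmeet Sj hSjprop
  refine ⟨max i i', max_lt hi hi', β, hβ, ?_⟩
  intro x hx
  set j : Set.Iio θ.ord := φ.symm ⟨x, hx⟩ with hj
  obtain ⟨γ, hγSj, hγD⟩ := hmeet j.1 j.2
  rw [hSjeq j.1 j.2] at hγSj
  obtain ⟨hγS, hxγ⟩ := hγSj
  have e1 : φ ⟨(j : Ordinal), j.2⟩ = ⟨x, hx⟩ := φ.apply_symm_apply ⟨x, hx⟩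
  have e2 : (↑(φ ⟨(j : Ordinal), j.2⟩) : Ordinal) = x := congrArg Subtype.val e1
  rw [e2] at hxγ
  have hglt : γ < lam.ord := hSsub hγS
  -- x ∈ D i' γ ⊆ D (max i i') γ, γ ∈ D i β ⊆ D (max i i') β, transitivity
  have h1 : x ∈ M.D (max i i') γ :=
    M.mono_le hglt (le_max_right i i') (max_lt hi hi') hxγ
  have h2 : γ ∈ M.D (max i i') β :=
    M.mono_le hβ (le_max_left i i') (max_lt hi hi') hγD
  exact htr (max i i') (max_lt hi hi') γ β hβ h2 h1
end

section
/- Let κ > ω₁ be a regular cardinal and ⟨C_α | α ∈ lim(κ)⟩ a coherent sequence. If there exist stationary S₀, S₁ ⊆ κ such that for every limit α < κ, C'_α ∩ S₀ = ∅ or C'_α ∩ S₁ = ∅, then the sequence has no thread (i.e., it is a □(κ)-sequence). -/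
/-- `C` is a coherent sequence on `lam`: each `C α` is club in `α` for limit
`α < lam`, and if `α` is a limit point of `C β` then `C α = C β ∩ α`. -/
def Coherent (lam : Ordinal) (C : Ordinal → Set Ordinal) : Prop :=
  (∀ α, α < lam → Order.IsSuccLimit α → IsClubIn (C α) α) ∧
  (∀ α β, β < lam → α < β → IsAcc (C β) α → C α = C β ∩ Set.Iio α)

/-- `T` threads the coherent sequence `C`. -/
def IsThread (lam : Ordinal) (C : Ordinal → Set Ordinal) (T : Set Ordinal) : Prop :=
  IsClubIn T lam ∧ ∀ α, IsAcc T α → T ∩ Set.Iio α = C α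

/-- A `□(lam)`-sequence: a coherent sequence with no thread. -/
def SqSeq (lam : Ordinal) (C : Ordinal → Set Ordinal) : Prop :=
  Coherent lam C ∧ ¬ ∃ T, IsThread lam C T

/-- If `κ > ω₁` is regular, `C` is a coherent sequence on `κ`, and there are
stationary `S₀, S₁ ⊆ κ` such that every `C α` has its set of limit points disjoint
from `S₀` or from `S₁`, then `C` has no thread. -/
theorem stmt_10 (κ : Cardinal) (hreg : κ.IsRegular) (hω₁ : Cardinal.aleph 1 < κ)
    (C : Ordinal → Set Ordinal) (hcoh : Coherent κ.ord C)
    (S₀ S₁ : Set Ordinal) (hS₀ : S₀ ⊆ Set.Iio κ.ord) (hS₁ : S₁ ⊆ Set.Iio κ.ord)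
    (hst₀ : IsStationaryIn S₀ κ.ord) (hst₁ : IsStationaryIn S₁ κ.ord)
    (hsplit : ∀ α, α < κ.ord → Order.IsSuccLimit α →
      (∀ β, β < α → IsAcc (C α) β → β ∉ S₀) ∨ (∀ β, β < α → IsAcc (C α) β → β ∉ S₁)) :
    ¬ ∃ T, IsThread κ.ord C T := by
  rintro ⟨T, ⟨hTlt, hTub, hTcl⟩, hTthread⟩
  have hκord : Order.IsSuccLimit κ.ord := Cardinal.isSuccLimit_ord hreg.aleph0_le
  -- a step function producing larger elements of T
  have hstep : ∀ x, x < κ.ord → ∃ y, y ∈ T ∧ x < y ∧ y < κ.ord := by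
    intro x hx
    obtain ⟨y, hyT, hxy⟩ := hTub (x + 1) (hκord.succ_lt hx)
    exact ⟨y, hyT, lt_of_lt_of_le (Order.lt_succ x) hxy, hTlt y hyT⟩
  -- accumulation points of T are unbounded in κ.ord
  have hacc : ∀ γ, γ < κ.ord → ∃ δ, δ < κ.ord ∧ γ < δ ∧ IsAcc T δ := by
    intro γ hγ
    set F : Ordinal → Ordinal := fun x =>
      if h : x < κ.ord then Classical.choose (hstep x h) else 0 with hF
    have hFspec : ∀ x (h : x < κ.ord), F x ∈ T ∧ x < F x ∧ F x < κ.ord := by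
      intro x h
      simp only [hF, dif_pos h]
      exact Classical.choose_spec (hstep x h)
    set g : ℕ → Ordinal := fun n => F^[n + 1] γ with hg
    have hginv : ∀ n, g n ∈ T ∧ γ < g n ∧ g n < κ.ord ∧ g n < g (n + 1) := by
      intro n
      induction n with
      | zero =>
        obtain ⟨h1, h2, h3⟩ := hFspec γ hγ
        have hgz : g 0 = F γ := by simp [hg]
        obtain ⟨h1', h2', h3'⟩ := hFspec (F γ) h3
        have hgs : g 1 = F (F γ) := by
          simp [hg, Function.iterate_succ_apply']
        refine ⟨by rwa [hgz], by rwa [hgz], by rwa [hgz], ?_⟩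
        rw [hgz, hgs]; exact h2'
      | succ n ih =>
        obtain ⟨ih1, ih2, ih3, ih4⟩ := ih
        have hgs : g (n + 1) = F (g n) := by
          simp [hg, Function.iterate_succ_apply']
        obtain ⟨h1, h2, h3⟩ := hFspec (g n) ih3
        have hgs2 : g (n + 2) = F (g (n + 1)) := by
          simp [hg, Function.iterate_succ_apply']
        obtain ⟨h1', h2', h3'⟩ := hFspec (g (n + 1)) (by rw [hgs]; exact h3)
        refine ⟨by rwa [hgs], lt_trans ih2 ih4, by rwa [hgs], ?_⟩
        rw [hgs2]; exact h2'
    have hmono : ∀ n, g n < g (n + 1) := fun n => (hginv n).2.2.2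
    set δ : Ordinal := ⨆ n, g n with hδ
    have hι : Cardinal.lift (Cardinal.mk ℕ) < (κ.ord).cof := by
      rw [Cardinal.mk_nat, Cardinal.lift_aleph0, hreg.cof_eq]
      exact (Cardinal.aleph0_le_aleph 1).trans_lt hω₁
    have hδlt : δ < κ.ord := Ordinal.iSup_lt_ord_lift hι (fun n => (hginv n).2.2.1)
    have hγδ : γ < δ := lt_of_lt_of_le (hginv 0).2.1 (Ordinal.le_iSup g 0)
    refine ⟨δ, hδlt, hγδ, lt_of_le_of_lt (zero_le (a := γ)) hγδ, ?_⟩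
    intro β hβ
    obtain ⟨n, hn⟩ := Ordinal.lt_iSup_iff.mp hβ
    exact ⟨g n, (hginv n).1, hn, lt_of_lt_of_le (hmono n) (Ordinal.le_iSup g (n + 1))⟩
  -- the set of accumulation points of T below κ.ord is club
  set A : Set Ordinal := {δ | δ < κ.ord ∧ IsAcc T δ} with hA
  have hAclub : IsClubIn A κ.ord := by
    refine ⟨fun x hx => hx.1, fun γ hγ => ?_, fun δ hδ hδA => ?_⟩
    · obtain ⟨δ, h1, h2, h3⟩ := hacc γ hγ
      exact ⟨δ, ⟨h1, h3⟩, h2.le⟩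
    · refine ⟨hδ, hδA.1, fun γ hγ => ?_⟩
      obtain ⟨x, hxA, hγx, hxδ⟩ := hδA.2 γ hγ
      obtain ⟨y, hyT, hγy, hyx⟩ := hxA.2.2 γ hγx
      exact ⟨y, hyT, hγy, lt_trans hyx hxδ⟩
  obtain ⟨δ₀, hδ₀S, hδ₀A⟩ := hst₀ A hAclub
  obtain ⟨δ₁, hδ₁S, hδ₁A⟩ := hst₁ A hAclub
  -- pick a limit point of T above both
  obtain ⟨α, hαlt, hmaxα, hαacc⟩ := hacc (max δ₀ δ₁) (max_lt (hδ₀A.1) (hδ₁A.1))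
  have hαlim : Order.IsSuccLimit α := by
    refine Ordinal.isSuccLimit_iff.2 ⟨ne_of_gt hαacc.1, fun b hb => ?_⟩
    obtain ⟨x, _, hbx, hxα⟩ := hαacc.2 b hb.lt
    exact hb.2 hbx hxα
  have hCα : T ∩ Set.Iio α = C α := hTthread α hαacc
  have haccCα : ∀ δ, δ ∈ A → δ < α → IsAcc (C α) δ := by
    intro δ hδA hδα
    rw [← hCα]
    refine ⟨hδA.2.1, fun γ hγ => ?_⟩
    obtain ⟨x, hxT, hγx, hxδ⟩ := hδA.2.2 γ hγ
    exact ⟨x, ⟨hxT, lt_trans hxδ hδα⟩, hγx, hxδ⟩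
  rcases hsplit α hαlt hαlim with h | h
  · exact h δ₀ (lt_of_le_of_lt (le_max_left δ₀ δ₁) hmaxα)
      (haccCα δ₀ hδ₀A (lt_of_le_of_lt (le_max_left δ₀ δ₁) hmaxα)) hδ₀S
  · exact h δ₁ (lt_of_le_of_lt (le_max_right δ₀ δ₁) hmaxα)
      (haccCα δ₁ hδ₁A (lt_of_le_of_lt (le_max_right δ₀ δ₁) hmaxα)) hδ₁S
end

section
/- Let μ < κ be infinite regular cardinals. Then □^μ(κ) holds if and only if there is a □(κ)-sequence ⟨C_α⟩ such that {α < κ | otp(C_α) = μ} is stationary. -/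
/-- The sequence `C` avoids the set `S`: no element of `S` is a limit point of any `C α`. -/
def Avoids (lam : Ordinal) (C : Ordinal → Set Ordinal) (S : Set Ordinal) : Prop :=
  ∀ α, α < lam → Order.IsSuccLimit α → ∀ β, β < α → IsAcc (C α) β → β ∉ S

/-- `□(lam, S)`: there is a `□(lam)`-sequence avoiding `S`. -/
def SqAvoid (lam : Ordinal) (S : Set Ordinal) : Prop :=
  ∃ C, SqSeq lam C ∧ Avoids lam C S

/-- `□^μ(lam)`: there is a `□(lam)`-sequence such that
`{α ∈ S^lam_μ | C_α^{[μ]} is bounded below α}` is stationary, where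
`C_α^{[μ]} = {γ ∈ C α | μ ∣ otp (C α ∩ γ)}`. -/
def SqMu (mu : Cardinal) (lam : Ordinal) : Prop :=
  ∃ C, SqSeq lam C ∧ IsStationaryIn
    {α | α < lam ∧ α.cof = mu ∧
      ∃ ξ < α, ∀ γ ∈ C α, Ordinal.lift.{1,0} mu.ord ∣ otp (C α ∩ Set.Iio γ) → γ ≤ ξ}
    lam

namespace Work
open Ordinal Set

open Ordinal Set

noncomputable def idx (X : Set Ordinal) (γ : Ordinal) : Ordinal.{1} :=
  otp (X ∩ Set.Iio γ)

/-- the iso between X ∩ Iio γ and the initial segment of X below γ -/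
def segIso (X : Set Ordinal) {γ : Ordinal} (hγ : γ ∈ X) :
    ((· < ·) : (X ∩ Set.Iio γ : Set Ordinal) → _ → Prop) ≃r
      (Subrel ((· < ·) : X → X → Prop) { b | b < (⟨γ, hγ⟩ : X) }) where
  toFun x := ⟨⟨x.1, x.2.1⟩, x.2.2⟩
  invFun x := ⟨x.1.1, ⟨x.1.2, x.2⟩⟩
  left_inv x := rfl
  right_inv x := rfl
  map_rel_iff' := Iff.rfl

theorem idx_eq_typein (X : Set Ordinal) {γ : Ordinal} (hγ : γ ∈ X) :
    idx X γ = Ordinal.typein ((· < ·) : X → X → Prop) ⟨γ, hγ⟩ := by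
  rw [← Ordinal.type_subrel]
  exact Quotient.sound ⟨segIso X hγ⟩

theorem idx_lt_otp (X : Set Ordinal) {γ : Ordinal} (hγ : γ ∈ X) : idx X γ < otp X := by
  rw [idx_eq_typein X hγ]; exact Ordinal.typein_lt_type _ _

theorem idx_lt_idx (X : Set Ordinal) {γ δ : Ordinal} (hγ : γ ∈ X) (hδ : δ ∈ X) :
    idx X γ < idx X δ ↔ γ < δ := by
  rw [idx_eq_typein X hγ, idx_eq_typein X hδ, Ordinal.typein_lt_typein]
  exact Iff.rfl

theorem idx_le_idx (X : Set Ordinal) {γ δ : Ordinal} (hγ : γ ∈ X) (hδ : δ ∈ X) :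
    idx X γ ≤ idx X δ ↔ γ ≤ δ := by
  rw [← not_lt, ← not_lt, idx_lt_idx X hδ hγ]

theorem idx_surj (X : Set Ordinal) {i : Ordinal.{1}} (hi : i < otp X) :
    ∃ γ ∈ X, idx X γ = i := by
  obtain ⟨a, ha⟩ := Ordinal.typein_surj ((· < ·) : X → X → Prop) hi
  exact ⟨a.1, a.2, by rw [idx_eq_typein X a.2]; exact ha⟩

theorem idx_congr {X : Set Ordinal} {β γ : Ordinal} (h : γ ≤ β) :
    idx (X ∩ Set.Iio β) γ = idx X γ := by
  unfold idx
  congr 1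
  ext x
  exact ⟨fun hx => ⟨hx.1.1, hx.2⟩, fun hx => ⟨⟨hx.1, lt_of_lt_of_le hx.2 h⟩, hx.2⟩⟩

theorem otp_eq_zero_iff {X : Set Ordinal} : otp X = 0 ↔ X = ∅ := by
  unfold otp
  rw [Ordinal.type_eq_zero_iff_isEmpty, Set.isEmpty_coe_sort]

theorem otp_Iio (a : Ordinal) : otp (Set.Iio a) = Ordinal.lift.{1,0} a := by
  exact Ordinal.type_lt_Iio a


open Ordinal Set

variable {m : Ordinal.{1}}

/-- `o` is a limit of multiples of `m`. -/
def Lcond (m o : Ordinal.{1}) : Prop := o % m = 0 ∧ Order.IsSuccLimit (o / m)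

/-- the selection predicate -/
def Gsel (m o i : Ordinal.{1}) : Prop :=
  (Lcond m o ∧ m ∣ i) ∨ (¬ Lcond m o ∧ o - i ≤ m)

theorem gsel_of_L (h : Lcond m o) : Gsel m o i ↔ m ∣ i := by
  constructor
  · rintro (⟨_, hd⟩ | ⟨hn, _⟩); exact hd; exact absurd h hn
  · exact fun hd => Or.inl ⟨h, hd⟩

theorem gsel_of_not (h : ¬ Lcond m o) : Gsel m o i ↔ o - i ≤ m := by
  constructor
  · rintro (⟨hl, _⟩ | ⟨_, hs⟩); exact absurd hl h; assumption
  · exact fun hs => Or.inr ⟨h, hs⟩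

section arith
variable (hm0 : m ≠ 0) (hInd : ∀ s < m, s + m = m)

include hm0 hInd in
theorem addm (i : Ordinal.{1}) : i + m = m * (i / m + 1) := by
  conv_lhs => rw [← Ordinal.div_add_mod i m]
  rw [add_assoc, hInd _ (Ordinal.mod_lt i hm0), mul_add, mul_one]

include hm0 hInd in
theorem notP_of_L (hL : Lcond m o) {i : Ordinal.{1}} (hi : i < o) : ¬ (o - i ≤ m) := by
  intro h
  have h1 : o ≤ i + m := Ordinal.sub_le.1 h
  rw [addm hm0 hInd i] at h1
  have hq : i / m < o / m := (Ordinal.div_lt hm0).2 (by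
    calc i < o := hi
    _ = m * (o / m) + o % m := (Ordinal.div_add_mod o m).symm
    _ = m * (o / m) := by rw [hL.1, add_zero])
  have h2 : i / m + 1 < o / m := hL.2.succ_lt hq
  have : m * (i / m + 1) < m * (o / m) := (mul_lt_mul_iff_right₀ (pos_iff_ne_zero.2 hm0)).2 h2
  exact absurd (h1.trans_lt (this.trans_le (Ordinal.mul_div_le o m))) (lt_irrefl o)

theorem sub_anti {o i j : Ordinal.{1}} (h : j ≤ i) : o - i ≤ o - j := by
  rw [Ordinal.sub_le]
  calc o ≤ j + (o - j) := Ordinal.le_add_sub o j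
  _ ≤ i + (o - j) := add_le_add_left h _

include hm0 in
theorem Lcond_of_mult_unbounded {o : Ordinal.{1}} (h0 : o ≠ 0)
    (hub : ∀ i < o, ∃ j, i < j ∧ j < o ∧ m ∣ j) : Lcond m o := by
  have key : ∀ j < o, m ∣ j → j ≤ m * (o / m) := by
    rintro j hj ⟨k, rfl⟩
    rcases le_or_gt k (o / m) with hk | hk
    · exact mul_le_mul_right hk m
    · exfalso
      have h2 : m * (o / m) + m ≤ m * k := by
        have h1 : m * (o / m + 1) ≤ m * k := mul_le_mul_right
          (by rw [Ordinal.add_one_eq_succ]; exact Order.succ_le_of_lt hk) m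
        rwa [mul_add, mul_one] at h1
      have h3 : o < m * (o / m) + m := by
        conv_lhs => rw [← Ordinal.div_add_mod o m]
        exact add_lt_add_right (Ordinal.mod_lt o hm0) _
      exact absurd (h3.trans_le (h2.trans hj.le)) (lt_irrefl o)
  have hr : o % m = 0 := by
    by_contra hr
    have hlt : m * (o / m) < o := by
      conv_rhs => rw [← Ordinal.div_add_mod o m]
      simpa using pos_iff_ne_zero.2 hr
    obtain ⟨j, hj1, hj2, hj3⟩ := hub _ hlt
    exact absurd (key j hj2 hj3) (not_le.2 hj1)
  refine ⟨hr, ?_⟩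
  have hq0 : o / m ≠ 0 := by
    intro h
    apply h0
    conv_lhs => rw [← Ordinal.div_add_mod o m]
    rw [h, hr, mul_zero, zero_add]
  rcases Ordinal.zero_or_succ_or_isSuccLimit (o / m) with h | ⟨s, hs⟩ | h
  · exact absurd h hq0
  · exfalso
    have ho : o = m * s + m := by
      conv_lhs => rw [← Ordinal.div_add_mod o m]
      rw [hr, add_zero, ← hs, Ordinal.mul_succ]
    have hms : m * s < o := by
      rw [ho]; simpa using pos_iff_ne_zero.2 hm0
    obtain ⟨j, hj1, hj2, hj3⟩ := hub _ hms
    obtain ⟨k, rfl⟩ := hj3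
    have hsk : s < k := (mul_lt_mul_iff_right₀ (pos_iff_ne_zero.2 hm0)).1 hj1
    have : o ≤ m * k := by
      rw [ho, ← Ordinal.mul_succ]
      exact mul_le_mul_right (Order.succ_le_of_lt hsk) m
    exact absurd (this.trans_lt hj2) (lt_irrefl o)
  · exact h

include hm0 in
theorem mult_unbounded_of_Lcond {o : Ordinal.{1}} (hL : Lcond m o) :
    ∀ i < o, ∃ j, i < j ∧ j < o ∧ m ∣ j := by
  intro i hi
  have ho : o = m * (o / m) := by
    conv_lhs => rw [← Ordinal.div_add_mod o m]
    rw [hL.1, add_zero]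
  refine ⟨m * (i / m + 1), ?_, ?_, Dvd.intro _ rfl⟩
  · have := Ordinal.lt_mul_succ_div i hm0
    rwa [← Ordinal.add_one_eq_succ] at this
  · rw [ho]
    apply (mul_lt_mul_iff_right₀ (pos_iff_ne_zero.2 hm0)).2
    have : i / m < o / m := (Ordinal.div_lt hm0).2 (by rwa [← ho])
    rw [Ordinal.add_one_eq_succ]
    exact hL.2.succ_lt this

include hm0 hInd in
theorem gsel_unbounded_of_not {o : Ordinal.{1}} (h0 : o ≠ 0) (hnL : ¬ Lcond m o) :
    ∀ i < o, ∃ j, i ≤ j ∧ j < o ∧ o - j ≤ m := by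
  have key : ∃ j0, j0 < o ∧ o - j0 ≤ m := by
    by_cases hr : o % m = 0
    · have hq0 : o / m ≠ 0 := by
        intro h
        apply h0
        conv_lhs => rw [← Ordinal.div_add_mod o m]
        rw [h, hr, mul_zero, zero_add]
      rcases Ordinal.zero_or_succ_or_isSuccLimit (o / m) with h | ⟨s, hs⟩ | h
      · exact absurd h hq0
      · have ho : o = m * s + m := by
          conv_lhs => rw [← Ordinal.div_add_mod o m]
          rw [hr, add_zero, ← hs, Ordinal.mul_succ]
        refine ⟨m * s, ?_, ?_⟩
        · rw [ho]; simpa using pos_iff_ne_zero.2 hm0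
        · rw [ho, Ordinal.add_sub_cancel]
      · exact absurd ⟨hr, h⟩ hnL
    · refine ⟨m * (o / m), ?_, ?_⟩
      · conv_rhs => rw [← Ordinal.div_add_mod o m]
        simpa using pos_iff_ne_zero.2 hr
      · rw [← Ordinal.mod_def]
        exact (Ordinal.mod_lt o hm0).le
  obtain ⟨j0, hj0, hP⟩ := key
  intro i hi
  rcases le_or_gt i j0 with h | h
  · exact ⟨j0, h, hj0, hP⟩
  · exact ⟨i, le_rfl, hi, (sub_anti h.le).trans hP⟩

include hm0 hInd in
theorem transfer_not {o o' j0 : Ordinal.{1}} (ho' : o' ≤ o) (hj0 : j0 < o') (hP : o - j0 ≤ m) :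
    (¬ Lcond m o') ∧ ∀ i < o', (o - i ≤ m ↔ o' - i ≤ m) := by
  have dirA : ∀ i, o - i ≤ m → o' - i ≤ m := by
    intro i h
    exact le_trans (Ordinal.sub_le.2 (ho'.trans (Ordinal.le_add_sub o i))) h
  constructor
  · intro hL
    exact notP_of_L hm0 hInd hL hj0 (dirA j0 hP)
  · intro i hi
    refine ⟨dirA i, fun h => ?_⟩
    rcases le_or_gt j0 i with hc | hc
    · exact (sub_anti hc).trans hP
    · -- i < j0
      have h1 : o ≤ m * (j0 / m + 1) := by
        rw [← addm hm0 hInd j0]; exact Ordinal.sub_le.1 hP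
      have h5 : o' ≤ m * (i / m + 1) := by
        rw [← addm hm0 hInd i]; exact Ordinal.sub_le.1 h
      have h2 : m * (j0 / m) ≤ j0 := Ordinal.mul_div_le j0 m
      have h3 : j0 / m < i / m + 1 :=
        (mul_lt_mul_iff_right₀ (pos_iff_ne_zero.2 hm0)).1
          ((h2.trans_lt hj0).trans_le h5)
      have h4 : j0 / m + 1 ≤ i / m + 1 := by
        rw [Ordinal.add_one_eq_succ, Ordinal.add_one_eq_succ] at *
        exact Order.succ_le_of_lt (Order.lt_succ_iff.2 (Order.lt_succ_iff.1 h3))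
      rw [Ordinal.sub_le, addm hm0 hInd i]
      exact h1.trans (mul_le_mul_right h4 m)

include hm0 hInd in
theorem gsel_transfer {o o' : Ordinal.{1}} (ho' : o' < o) (h0 : o' ≠ 0)
    (hub : ∀ i < o', ∃ j, i < j ∧ j < o' ∧ Gsel m o j) :
    ∀ i < o', (Gsel m o i ↔ Gsel m o' i) := by
  by_cases hL : Lcond m o
  · have hub' : ∀ i < o', ∃ j, i < j ∧ j < o' ∧ m ∣ j := by
      intro i hi
      obtain ⟨j, h1, h2, h3⟩ := hub i hi
      exact ⟨j, h1, h2, (gsel_of_L hL).1 h3⟩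
    have hL' : Lcond m o' := Lcond_of_mult_unbounded hm0 h0 hub'
    intro i _
    rw [gsel_of_L hL, gsel_of_L hL']
  · obtain ⟨j0, hj1, hj2, hj3⟩ := hub 0 (pos_iff_ne_zero.2 h0)
    have hP : o - j0 ≤ m := (gsel_of_not hL).1 hj3
    obtain ⟨hnL', hiff⟩ := transfer_not hm0 hInd ho'.le hj2 hP
    intro i hi
    rw [gsel_of_not hL, gsel_of_not hnL']
    exact hiff i hi

include hm0 hInd in
theorem gsel_mem {o istar : Ordinal.{1}} (hlt : istar < o) (h0 : istar ≠ 0)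
    (hub : ∀ i < istar, ∃ j, i < j ∧ j < istar ∧ Gsel m o j) : Gsel m o istar := by
  by_cases hL : Lcond m o
  · have hub' : ∀ i < istar, ∃ j, i < j ∧ j < istar ∧ m ∣ j := by
      intro i hi
      obtain ⟨j, h1, h2, h3⟩ := hub i hi
      exact ⟨j, h1, h2, (gsel_of_L hL).1 h3⟩
    have hL' : Lcond m istar := Lcond_of_mult_unbounded hm0 h0 hub'
    rw [gsel_of_L hL]
    exact ⟨istar / m, by conv_lhs => rw [← Ordinal.div_add_mod istar m, hL'.1, add_zero]⟩
  · obtain ⟨j0, hj1, hj2, hj3⟩ := hub 0 (pos_iff_ne_zero.2 h0)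
    rw [gsel_of_not hL] at *
    exact (sub_anti hj2.le).trans hj3

include hm0 hInd in
theorem gsel_unbounded {o : Ordinal.{1}} (h0 : o ≠ 0) :
    ∀ i < o, ∃ j, i ≤ j ∧ j < o ∧ Gsel m o j := by
  intro i hi
  by_cases hL : Lcond m o
  · obtain ⟨j, h1, h2, h3⟩ := mult_unbounded_of_Lcond hm0 hL i hi
    exact ⟨j, h1.le, h2, (gsel_of_L hL).2 h3⟩
  · obtain ⟨j, h1, h2, h3⟩ := gsel_unbounded_of_not hm0 hInd h0 hL i hi
    exact ⟨j, h1, h2, (gsel_of_not hL).2 h3⟩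

include hm0 hInd in
theorem not_Lcond_succ_block {s : Ordinal.{1}} : ¬ Lcond m (m * s + m) := by
  intro hL
  exact notP_of_L (i := m * s) hm0 hInd hL (by simpa using pos_iff_ne_zero.2 hm0)
    (by rw [Ordinal.add_sub_cancel])

include hm0 hInd in
theorem gsel_succ_iff {s i : Ordinal.{1}} (hi : i < m * s + m) :
    Gsel m (m * s + m) i ↔ m * s ≤ i := by
  rw [gsel_of_not (not_Lcond_succ_block hm0 hInd)]
  constructor
  · intro h
    by_contra hx
    push_neg at hx
    have h1 : m * s + m ≤ m * (i / m + 1) := by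
      rw [← addm hm0 hInd i]; exact Ordinal.sub_le.1 h
    have h2 : i / m + 1 ≤ s := by
      rw [Ordinal.add_one_eq_succ]
      exact Order.succ_le_of_lt ((Ordinal.div_lt hm0).2 hx)
    have h3 : m * (i / m + 1) ≤ m * s := mul_le_mul_right h2 m
    have : m * s + m ≤ m * s := h1.trans h3
    exact absurd ((by simpa using pos_iff_ne_zero.2 hm0 : m * s < m * s + m).trans_le this)
      (lt_irrefl _)
  · intro h
    rw [Ordinal.sub_le]
    exact add_le_add_left h m

end arith

section clubs
open Ordinal Set

theorem acc_isLimit {C : Set Ordinal} {δ : Ordinal} (h : IsAcc C δ) : Order.IsSuccLimit δ := by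
  refine Ordinal.isSuccLimit_iff.2 ⟨h.1.ne', Order.isSuccPrelimit_of_succ_lt fun a ha => ?_⟩
  obtain ⟨x, _, hx1, hx2⟩ := h.2 a ha
  exact lt_of_le_of_lt (Order.succ_le_of_lt hx1) hx2

theorem acc_mono {C D : Set Ordinal} {δ : Ordinal} (hsub : C ⊆ D) (h : IsAcc C δ) : IsAcc D δ :=
  ⟨h.1, fun γ hγ => by obtain ⟨x, hx, h1, h2⟩ := h.2 γ hγ; exact ⟨x, hsub hx, h1, h2⟩⟩

theorem club_otp_ne_zero {X : Set Ordinal} {α : Ordinal} (hX : IsClubIn X α) (h0 : 0 < α) :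
    otp X ≠ 0 := by
  obtain ⟨x, hx, -⟩ := hX.2.1 0 h0
  intro h
  rw [otp_eq_zero_iff] at h
  exact absurd (h ▸ hx) (Set.notMem_empty x)

theorem club_otp_isLimit {X : Set Ordinal} {α : Ordinal} (hX : IsClubIn X α) (hα : Order.IsSuccLimit α) :
    Order.IsSuccLimit (otp X) := by
  refine Ordinal.isSuccLimit_iff.2 ⟨club_otp_ne_zero hX hα.pos, Order.isSuccPrelimit_of_succ_lt fun i hi => ?_⟩
  obtain ⟨γ, hγ, rfl⟩ := idx_surj X hi
  obtain ⟨x, hx, hge⟩ := hX.2.1 (γ + 1) (hα.succ_lt (hX.1 γ hγ))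
  have hlt : γ < x := lt_of_lt_of_le (lt_add_one γ) hge
  exact lt_of_le_of_lt (Order.succ_le_of_lt ((idx_lt_idx X hγ hx).2 hlt)) (idx_lt_otp X hx)

end clubs

section construction
open Ordinal Set

variable {m : Ordinal.{1}} (hm0 : m ≠ 0) (hInd : ∀ s < m, s + m = m)

/-- The derived sequence member. -/
def Dset (m : Ordinal.{1}) (X : Set Ordinal) : Set Ordinal :=
  {γ | γ ∈ X ∧ Gsel m (otp X) (idx X γ)}

theorem Dset_subset {X : Set Ordinal} : Dset m X ⊆ X := fun _ h => h.1

theorem idx_unbounded_of_acc (X : Set Ordinal) {β : Ordinal}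
    (h : ∀ γ < β, ∃ x ∈ Dset m X, γ < x ∧ x < β) :
    ∀ i < idx X β, ∃ j, i < j ∧ j < idx X β ∧ Gsel m (otp X) j := by
  intro i hi
  obtain ⟨γ, hγ, hγi⟩ := idx_surj (X ∩ Set.Iio β) hi
  rw [idx_congr hγ.2.le] at hγi
  obtain ⟨x, hx, h1, h2⟩ := h γ hγ.2
  refine ⟨idx X x, ?_, ?_, hx.2⟩
  · rw [← hγi]; exact (idx_lt_idx X hγ.1 (Dset_subset hx)).2 h1
  · have : idx X x = idx (X ∩ Set.Iio β) x := (idx_congr h2.le).symm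
    rw [this]
    exact idx_lt_otp _ ⟨Dset_subset hx, h2⟩

theorem idx_acc_ne_zero (X : Set Ordinal) {β : Ordinal} (hacc : IsAcc (Dset m X) β) :
    idx X β ≠ 0 := by
  obtain ⟨x, hx, -, h2⟩ := hacc.2 0 hacc.1
  intro h
  rw [idx, otp_eq_zero_iff] at h
  exact absurd (h ▸ (⟨Dset_subset hx, h2⟩ : x ∈ X ∩ Set.Iio β)) (Set.notMem_empty x)

include hm0 hInd in
theorem Dset_club {X : Set Ordinal} {α : Ordinal} (hX : IsClubIn X α) (hα : Order.IsSuccLimit α) :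
    IsClubIn (Dset m X) α := by
  have h0 : otp X ≠ 0 := club_otp_ne_zero hX hα.pos
  refine ⟨fun x hx => hX.1 x (Dset_subset hx), ?_, ?_⟩
  · intro γ hγ
    obtain ⟨c, hc, hcγ⟩ := hX.2.1 γ hγ
    obtain ⟨j, hj1, hj2, hj3⟩ := gsel_unbounded hm0 hInd h0 (idx X c) (idx_lt_otp X hc)
    obtain ⟨x, hx, hxj⟩ := idx_surj X hj2
    refine ⟨x, ⟨hx, hxj ▸ hj3⟩, hcγ.trans ?_⟩
    rw [← idx_le_idx X hc hx, hxj]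
    exact hj1
  · intro δ hδ hacc
    have haccX : IsAcc X δ := acc_mono (Dset_subset) hacc
    have hδX : δ ∈ X := hX.2.2 δ hδ haccX
    refine ⟨hδX, ?_⟩
    have := idx_unbounded_of_acc X hacc.2
    exact gsel_mem hm0 hInd (idx_lt_otp X hδX) (idx_acc_ne_zero X hacc) this

include hm0 hInd in
theorem Dset_coherent {Y : Set Ordinal} {β : Ordinal} (hβ : β ∈ Y)
    (hacc : IsAcc (Dset m Y) β) :
    Dset m (Y ∩ Set.Iio β) = Dset m Y ∩ Set.Iio β := by
  have hub := idx_unbounded_of_acc (m := m) Y hacc.2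
  have htr := gsel_transfer hm0 hInd (idx_lt_otp Y hβ) (idx_acc_ne_zero Y hacc) hub
  ext γ
  constructor
  · rintro ⟨⟨hγY, hγβ⟩, hsel⟩
    rw [idx_congr hγβ.le] at hsel
    have hidx : idx Y γ < idx Y β := (idx_lt_idx Y hγY hβ).2 hγβ
    exact ⟨⟨hγY, (htr _ hidx).2 hsel⟩, hγβ⟩
  · rintro ⟨⟨hγY, hsel⟩, hγβ⟩
    have hidx : idx Y γ < idx Y β := (idx_lt_idx Y hγY hβ).2 hγβ
    refine ⟨⟨hγY, hγβ⟩, ?_⟩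
    rw [idx_congr hγβ.le]
    exact (htr _ hidx).1 hsel

theorem otp_Dset {ν : Ordinal.{0}} {X : Set Ordinal} {s : Ordinal.{1}} (hν0 : ν ≠ 0)
    (hInd' : ∀ t < Ordinal.lift.{1,0} ν, t + Ordinal.lift.{1,0} ν = Ordinal.lift.{1,0} ν)
    (ho : otp X = Ordinal.lift.{1,0} ν * s + Ordinal.lift.{1,0} ν) :
    otp (Dset (Ordinal.lift.{1,0} ν) X) = Ordinal.lift.{1,0} ν := by
  set m' : Ordinal.{1} := Ordinal.lift.{1,0} ν with hm'
  have hm0' : m' ≠ 0 := by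
    intro h
    have h2 : Ordinal.lift.{1,0} ν = Ordinal.lift.{1,0} 0 := by rw [Ordinal.lift_zero]; exact h
    exact hν0 (Ordinal.lift_inj.1 h2)
  set b : Ordinal.{1} := m' * s with hb
  have mem_iff : ∀ γ, γ ∈ Dset m' X ↔ γ ∈ X ∧ b ≤ idx X γ := by
    intro γ
    constructor
    · rintro ⟨h1, h2⟩
      rw [ho] at h2
      exact ⟨h1, (gsel_succ_iff hm0' hInd' (ho ▸ idx_lt_otp X h1)).1 h2⟩
    · rintro ⟨h1, h2⟩
      refine ⟨h1, ?_⟩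
      rw [ho]
      exact (gsel_succ_iff hm0' hInd' (ho ▸ idx_lt_otp X h1)).2 h2
  have hval : ∀ γ : ↥(Dset m' X), ∃ w : Ordinal.{0}, w < ν ∧
      Ordinal.lift.{1,0} w = idx X γ.1 - b := by
    intro γ
    have h1 : b ≤ idx X γ.1 := ((mem_iff γ.1).1 γ.2).2
    have h2 : idx X γ.1 < b + m' := by
      have := idx_lt_otp X (Dset_subset γ.2)
      rwa [ho] at this
    have h3 : idx X γ.1 - b < m' := by
      rw [← add_lt_add_iff_left b, Ordinal.add_sub_cancel_of_le h1]
      exact h2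
    obtain ⟨w, hw1, hw2⟩ := Ordinal.lt_lift_iff.1 h3
    exact ⟨w, hw1, hw2⟩
  choose w hw1 hw2 using hval
  have key : ∀ γ : ↥(Dset m' X), b + Ordinal.lift.{1,0} (w γ) = idx X γ.1 := by
    intro γ
    rw [hw2 γ, Ordinal.add_sub_cancel_of_le ((mem_iff γ.1).1 γ.2).2]
  have hmono : ∀ γ δ : ↥(Dset m' X), (w γ < w δ ↔ (γ : Ordinal) < (δ : Ordinal)) := by
    intro γ δ
    rw [← Ordinal.lift_lt.{1,0}, ← add_lt_add_iff_left b, key γ, key δ]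
    exact idx_lt_idx X (Dset_subset γ.2) (Dset_subset δ.2)
  have hinj : Function.Injective (fun γ : ↥(Dset m' X) => (⟨w γ, hw1 γ⟩ : ↥(Set.Iio ν))) := by
    intro γ δ h
    simp only [Subtype.mk.injEq] at h
    apply Subtype.ext
    rcases lt_trichotomy (γ : Ordinal) (δ : Ordinal) with hc | hc | hc
    · exact absurd ((hmono γ δ).2 hc) (by rw [Subtype.mk.inj h]; exact lt_irrefl _)
    · exact hc
    · exact absurd ((hmono δ γ).2 hc) (by rw [Subtype.mk.inj h]; exact lt_irrefl _)
  have hsurj : Function.Surjective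
      (fun γ : ↥(Dset m' X) => (⟨w γ, hw1 γ⟩ : ↥(Set.Iio ν))) := by
    rintro ⟨j, hj⟩
    have hlt : b + Ordinal.lift.{1,0} j < otp X := by
      rw [ho]
      exact add_lt_add_right (Ordinal.lift_lt.2 hj) b
    obtain ⟨γ, hγ, hγj⟩ := idx_surj X hlt
    have hmem : γ ∈ Dset m' X := (mem_iff γ).2 ⟨hγ, hγj ▸ (le_self_add : b ≤ b + Ordinal.lift.{1,0} j)⟩
    refine ⟨⟨γ, hmem⟩, ?_⟩
    have : Ordinal.lift.{1,0} (w ⟨γ, hmem⟩) = Ordinal.lift.{1,0} j := by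
      rw [hw2 ⟨γ, hmem⟩]
      simp only
      rw [hγj, Ordinal.add_sub_cancel]
    exact Subtype.ext (Ordinal.lift_inj.1 this)
  have e : ((· < ·) : ↥(Dset m' X) → ↥(Dset m' X) → Prop) ≃r
      ((· < ·) : ↥(Set.Iio ν) → ↥(Set.Iio ν) → Prop) := by
    refine ⟨Equiv.ofBijective _ ⟨hinj, hsurj⟩, ?_⟩
    intro γ δ
    exact (hmono γ δ).trans Iff.rfl |>.symm |>.symm
  calc otp (Dset m' X) = otp (Set.Iio ν) := Ordinal.type_eq.2 ⟨e⟩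
  _ = Ordinal.lift.{1,0} ν := otp_Iio ν

end construction

section cof
open Ordinal Set

noncomputable def tyin {ρ : Ordinal.{0}} (t : ρ.ToType) : Ordinal.{0} :=
  (@Ordinal.typein ρ.ToType (· < ·) isWellOrder_lt) t

theorem tyin_lt {ρ : Ordinal.{0}} (t : ρ.ToType) : tyin t < ρ := by
  have h := @Ordinal.typein_lt_type ρ.ToType (· < ·) isWellOrder_lt t
  rwa [Ordinal.type_toType] at h

theorem tyin_surj {ρ : Ordinal.{0}} {w : Ordinal} (h : w < ρ) : ∃ t : ρ.ToType, tyin t = w := by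
  have h2 := @Ordinal.typein_surj ρ.ToType (· < ·) isWellOrder_lt w
    (by rw [Ordinal.type_toType]; exact h)
  obtain ⟨t, ht⟩ := h2
  exact ⟨t, ht⟩

theorem cof_le_of_segment {X : Set Ordinal} {α : Ordinal} (hX : IsClubIn X α) (hα : Order.IsSuccLimit α)
    {b : Ordinal.{1}} {ρ : Ordinal.{0}} (hρ : ρ ≠ 0)
    (ho : otp X = b + Ordinal.lift.{1,0} ρ) : α.cof ≤ ρ.card := by
  have hidx : ∀ t : ρ.ToType, b + Ordinal.lift.{1,0} (tyin t) < otp X := by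
    intro t
    rw [ho]
    exact add_lt_add_right (Ordinal.lift_lt.2 (tyin_lt t)) b
  choose g hg1 hg2 using fun t => idx_surj X (hidx t)
  have hlsub : Ordinal.lsub.{0,0} g = α := by
    apply le_antisymm
    · exact Ordinal.lsub_le fun t => hX.1 _ (hg1 t)
    · by_contra hcon
      push_neg at hcon
      obtain ⟨c, hc, hcge⟩ := hX.2.1 (Ordinal.lsub g + 1) (hα.succ_lt hcon)
      have hc2 : idx X c < b + Ordinal.lift.{1,0} ρ := ho ▸ idx_lt_otp X hc
      have hex : ∃ t : ρ.ToType,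
          idx X c ≤ b + Ordinal.lift.{1,0} (tyin t) := by
        rcases le_or_gt (idx X c) b with h | h
        · obtain ⟨t⟩ := Ordinal.nonempty_toType_iff.2 hρ
          exact ⟨t, h.trans le_self_add⟩
        · have hsub : idx X c - b < Ordinal.lift.{1,0} ρ := by
            rw [← add_lt_add_iff_left b, Ordinal.add_sub_cancel_of_le h.le]
            exact hc2
          obtain ⟨w, hw1, hw2⟩ := Ordinal.lt_lift_iff.1 hsub
          obtain ⟨t, ht⟩ := tyin_surj hw1
          refine ⟨t, ?_⟩
          rw [ht, hw2, Ordinal.add_sub_cancel_of_le h.le]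
      obtain ⟨t, ht⟩ := hex
      have hcg : c ≤ g t := by
        rw [← idx_le_idx X hc (hg1 t), hg2 t]; exact ht
      have h1 : g t < Ordinal.lsub g := Ordinal.lt_lsub g t
      have h2 : Ordinal.lsub g < c := lt_of_lt_of_le (lt_add_one _) hcge
      exact absurd (hcg.trans_lt h1) (not_lt.2 h2.le)
  have hfin := Ordinal.cof_lsub_le g
  rw [hlsub, Cardinal.mk_toType] at hfin
  exact hfin

theorem cof_ge_of_otp {X : Set Ordinal} {α : Ordinal} (hX : IsClubIn X α) (hα : Order.IsSuccLimit α)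
    {ρ : Ordinal.{0}} (ho : otp X = Ordinal.lift.{1,0} ρ) : ρ.cof ≤ α.cof := by
  obtain ⟨ι, f, hf, hι⟩ := Ordinal.exists_lsub_cof α
  have hcex : ∀ t : ι, ∃ c ∈ X, f t ≤ c := fun t => hX.2.1 (f t) (hf ▸ Ordinal.lt_lsub f t)
  choose c hc1 hc2 using hcex
  have hwlt : ∀ t, idx X (c t) < Ordinal.lift.{1,0} ρ := fun t => ho ▸ idx_lt_otp X (hc1 t)
  choose w hw1 hw2 using fun t => Ordinal.lt_lift_iff.1 (hwlt t)
  have hlsub : Ordinal.lsub.{0,0} w = ρ := by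
    apply le_antisymm
    · exact Ordinal.lsub_le hw1
    · by_contra hcon
      push_neg at hcon
      have hlt : Ordinal.lift.{1,0} (Ordinal.lsub w) < otp X := by
        rw [ho]; exact Ordinal.lift_lt.2 hcon
      obtain ⟨x, hx, hxi⟩ := idx_surj X hlt
      have hxα : x + 1 < α := hα.succ_lt (hX.1 x hx)
      have hxl : x + 1 < Ordinal.lsub f := hf ▸ hxα
      obtain ⟨t, ht⟩ := Ordinal.lt_lsub_iff.1 hxl
      have hxc : x < c t := lt_of_lt_of_le (lt_of_lt_of_le (lt_add_one x) ht) (hc2 t)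
      have hii : idx X x < idx X (c t) := (idx_lt_idx X hx (hc1 t)).2 hxc
      rw [hxi, ← hw2 t] at hii
      have hfin : Ordinal.lsub w < w t := Ordinal.lift_lt.1 hii
      exact absurd (Ordinal.lt_lsub w t) (not_lt.2 hfin.le)
  have hfin := Ordinal.cof_lsub_le w
  rw [hlsub, hι] at hfin
  exact hfin

theorem cof_eq_of_otp_ord {X : Set Ordinal} {α : Ordinal} (hX : IsClubIn X α) (hα : Order.IsSuccLimit α)
    {c : Cardinal} (hc : c.IsRegular) (ho : otp X = Ordinal.lift.{1,0} c.ord) : α.cof = c := by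
  apply le_antisymm
  · have hρ : c.ord ≠ 0 := by
      rw [Ne, Cardinal.ord_eq_zero]
      exact hc.pos.ne'
    have h1 := cof_le_of_segment hX hα (b := 0) hρ (by rw [zero_add]; exact ho)
    rwa [Cardinal.card_ord] at h1
  · have h1 := cof_ge_of_otp hX hα ho
    rwa [hc.cof_eq] at h1

end cof

section glue
open Ordinal Set

theorem no_thread_of_top_empty {lam : Ordinal} (hlam : Order.IsSuccLimit lam) {D : Ordinal → Set Ordinal}
    (hD : D lam = ∅) : ¬ ∃ T, IsThread lam D T := by
  rintro ⟨T, hT1, hT2⟩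
  have hacc : IsAcc T lam := by
    refine ⟨hlam.pos, fun γ hγ => ?_⟩
    obtain ⟨x, hx, hxγ⟩ := hT1.2.1 (γ + 1) (hlam.succ_lt hγ)
    exact ⟨x, hx, lt_of_lt_of_le (lt_add_one γ) hxγ, hT1.1 x hx⟩
  have hemp := hT2 lam hacc
  rw [hD] at hemp
  obtain ⟨x, hx, -⟩ := hT1.2.1 0 hlam.pos
  have hmem : x ∈ T ∩ Set.Iio lam := ⟨hx, hT1.1 x hx⟩
  rw [hemp] at hmem
  exact absurd hmem (Set.notMem_empty x)

theorem stat_mono {S T : Set Ordinal} {lam : Ordinal} (h : S ⊆ T)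
    (hS : IsStationaryIn S lam) : IsStationaryIn T lam := fun C hC => by
  obtain ⟨x, hx1, hx2⟩ := hS C hC
  exact ⟨x, h hx1, hx2⟩

end glue

end Work

/-- For infinite regular `μ < κ`, `□^μ(κ)` holds iff there is a `□(κ)`-sequence
`C` such that `{α < κ | otp (C α) = μ}` is stationary. -/
theorem stmt_12 (μ κ : Cardinal) (hμ : μ.IsRegular) (hκ : κ.IsRegular) (hlt : μ < κ) :
    SqMu μ κ.ord ↔
      ∃ C, SqSeq κ.ord C ∧ IsStationaryIn
        {α | α < κ.ord ∧ Order.IsSuccLimit α ∧ otp (C α) = Ordinal.lift.{1,0} μ.ord} κ.ord := by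
  classical
  have hμo : μ.ord ≠ 0 := by
    rw [Ne, Cardinal.ord_eq_zero]
    exact hμ.pos.ne'
  have hm0 : (Ordinal.lift.{1,0} μ.ord) ≠ 0 := by
    intro h
    have h2 : Ordinal.lift.{1,0} μ.ord = Ordinal.lift.{1,0} 0 := by rw [Ordinal.lift_zero]; exact h
    exact hμo (Ordinal.lift_inj.1 h2)
  have hInd : ∀ s < Ordinal.lift.{1,0} μ.ord,
      s + Ordinal.lift.{1,0} μ.ord = Ordinal.lift.{1,0} μ.ord := by
    intro s hs
    obtain ⟨s0, hs0, rfl⟩ := Ordinal.lt_lift_iff.1 hs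
    rw [← Ordinal.lift_add]
    congr 1
    exact Ordinal.principal_add_iff_add_left_eq_self.1
      (Ordinal.isPrincipal_add_ord hμ.aleph0_le) s0 hs0
  have hκlim : Order.IsSuccLimit κ.ord := Cardinal.isSuccLimit_ord hκ.aleph0_le
  constructor
  · -- forward
    rintro ⟨C, hC, hstat⟩
    set m : Ordinal.{1} := Ordinal.lift.{1,0} μ.ord with hmdef
    set D : Ordinal.{0} → Set Ordinal.{0} :=
      (fun β => if h : β < κ.ord ∧ Order.IsSuccLimit β then Work.Dset m (C β) else ∅) with hDdef
    have hDpos : ∀ β (h : β < κ.ord ∧ Order.IsSuccLimit β), D β = Work.Dset m (C β) := by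
      intro β h; rw [hDdef]; exact dif_pos h
    have hDneg : ∀ β, ¬ (β < κ.ord ∧ Order.IsSuccLimit β) → D β = ∅ := by
      intro β h; rw [hDdef]; exact dif_neg h
    refine ⟨D, ⟨⟨?_, ?_⟩, ?_⟩, ?_⟩
    · -- clubs
      intro α hακ hαlim
      rw [hDpos α ⟨hακ, hαlim⟩]
      exact Work.Dset_club hm0 hInd (hC.1.1 α hακ hαlim) hαlim
    · -- coherence
      intro α β hβκ hαβ hacc
      by_cases hβlim : Order.IsSuccLimit β
      · rw [hDpos β ⟨hβκ, hβlim⟩] at hacc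
        have hαlim : Order.IsSuccLimit α := Work.acc_isLimit hacc
        have haccC : IsAcc (C β) α := Work.acc_mono Work.Dset_subset hacc
        have hcoh := hC.1.2 α β hβκ hαβ haccC
        have hαmem : α ∈ C β := (hC.1.1 β hβκ hβlim).2.2 α hαβ haccC
        rw [hDpos α ⟨hαβ.trans hβκ, hαlim⟩, hDpos β ⟨hβκ, hβlim⟩, hcoh]
        exact Work.Dset_coherent hm0 hInd hαmem hacc
      · rw [hDneg β (fun h => hβlim h.2)] at hacc
        obtain ⟨x, hx, -, -⟩ := hacc.2 0 hacc.1
        exact absurd hx (Set.notMem_empty x)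
    · -- no thread
      apply Work.no_thread_of_top_empty hκlim
      exact hDneg κ.ord (fun h => absurd h.1 (lt_irrefl _))
    · -- stationarity
      apply Work.stat_mono ?_ hstat
      rintro α ⟨hακ, hαcof, ξ, hξα, hξ⟩
      have hαlim : Order.IsSuccLimit α := Ordinal.aleph0_le_cof.1 (by rw [hαcof]; exact hμ.aleph0_le)
      refine ⟨hακ, hαlim, ?_⟩
      rw [hDpos α ⟨hακ, hαlim⟩]
      have hXclub : IsClubIn (C α) α := hC.1.1 α hακ hαlim
      set X := C α with hXdef
      set o : Ordinal.{1} := otp X with hodef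
      have hnL : ¬ Work.Lcond m o := by
        intro hL
        obtain ⟨c, hcX, hcξ⟩ := hXclub.2.1 (ξ + 1) (hαlim.succ_lt hξα)
        have hcgt : ξ < c := lt_of_lt_of_le (lt_add_one ξ) hcξ
        obtain ⟨j, hj1, hj2, hj3⟩ := Work.mult_unbounded_of_Lcond hm0 hL
          (Work.idx X c) (Work.idx_lt_otp X hcX)
        obtain ⟨γ, hγX, hγj⟩ := Work.idx_surj X hj2
        have hγξ : γ ≤ ξ := hξ γ hγX (by
          rw [show otp (C α ∩ Set.Iio γ) = Work.idx X γ from rfl, hγj]; exact hj3)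
        have hcγ : c < γ := by
          rw [← Work.idx_lt_idx X hcX hγX, hγj]; exact hj1
        exact absurd (lt_of_le_of_lt hγξ (hcgt.trans hcγ)) (lt_irrefl γ)
      have hr : o % m = 0 := by
        by_contra hr
        have hltm : o % m < m := Ordinal.mod_lt o hm0
        obtain ⟨ρ, hρ1, hρ2⟩ := Ordinal.lt_lift_iff.1 hltm
        have hρ0 : ρ ≠ 0 := by
          intro h; rw [h, Ordinal.lift_zero] at hρ2; exact hr hρ2.symm
        have hcle : α.cof ≤ ρ.card := Work.cof_le_of_segment hXclub hαlim hρ0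
          (by rw [hρ2]; exact (Ordinal.div_add_mod o m).symm)
        rw [hαcof] at hcle
        exact absurd (hcle.trans_lt (Cardinal.lt_ord.1 hρ1)) (lt_irrefl μ)
      have h00 : o ≠ 0 := Work.club_otp_ne_zero hXclub hαlim.pos
      have hq0 : o / m ≠ 0 := by
        intro h
        apply h00
        conv_lhs => rw [← Ordinal.div_add_mod o m]
        rw [h, hr, mul_zero, zero_add]
      have hqnl : ¬ Order.IsSuccLimit (o / m) := fun h => hnL ⟨hr, h⟩
      obtain ⟨s, hs⟩ := ((Ordinal.zero_or_succ_or_isSuccLimit (o / m)).resolve_left hq0).resolve_right hqnl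
      have ho : o = m * s + m := by
        conv_lhs => rw [← Ordinal.div_add_mod o m]
        rw [hr, add_zero, ← hs, Ordinal.mul_succ]
      exact Work.otp_Dset hμo hInd ho
  · -- backward
    rintro ⟨C, hC, hstat⟩
    refine ⟨C, hC, ?_⟩
    apply Work.stat_mono ?_ hstat
    rintro α ⟨hα1, hα2, hα3⟩
    have hXclub : IsClubIn (C α) α := hC.1.1 α hα1 hα2
    refine ⟨hα1, Work.cof_eq_of_otp_ord hXclub hα2 hμ hα3, ?_⟩
    obtain ⟨x0, hx0, -⟩ := hXclub.2.1 0 hα2.pos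
    refine ⟨x0, hXclub.1 x0 hx0, ?_⟩
    intro γ hγ hdvd
    have hlt : otp (C α ∩ Set.Iio γ) < Ordinal.lift.{1,0} μ.ord :=
      hα3 ▸ Work.idx_lt_otp (C α) hγ
    have h0 : otp (C α ∩ Set.Iio γ) = 0 := by
      by_contra h
      exact absurd (Ordinal.le_of_dvd h hdvd) (not_le.2 hlt)
    rw [Work.otp_eq_zero_iff] at h0
    by_contra hcon
    push_neg at hcon
    exact absurd (h0 ▸ (⟨hx0, hcon⟩ : x0 ∈ C α ∩ Set.Iio γ)) (Set.notMem_empty x0)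
end

section
/- Let μ < κ be infinite regular cardinals. If □^μ(κ) holds, then there is a stationary S ⊆ S^κ_μ such that □(κ, S) holds. -/
namespace Stmt13Aux

theorem typein_eq_otp (W : Set Ordinal) (g : ↥W) :
    Ordinal.typein ((· < ·) : W → W → Prop) g = otp (W ∩ Set.Iio (g : Ordinal)) := by
  rw [← Ordinal.type_subrel]
  exact RelIso.ordinal_type_eq
    ⟨⟨fun b => ⟨b.1.1, b.1.2, b.2⟩, fun z => ⟨⟨z.1, z.2.1⟩, z.2.2⟩, fun b => rfl, fun z => rfl⟩,
      Iff.rfl⟩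

theorem isAcc_mono {s t : Set Ordinal} {δ : Ordinal} (h : s ⊆ t) (ha : IsAcc s δ) : IsAcc t δ :=
  ⟨ha.1, fun γ hγ => by obtain ⟨x, hx, h1, h2⟩ := ha.2 γ hγ; exact ⟨x, h hx, h1, h2⟩⟩

variable (mu : Cardinal) (C : Ordinal → Set Ordinal)

/-- the μ-divisible-position points of `C β` -/
def AA (β : Ordinal) : Set Ordinal :=
  {γ | γ ∈ C β ∧ Ordinal.lift.{1,0} mu.ord ∣ otp (C β ∩ Set.Iio γ)}

def Bdd (β : Ordinal) : Prop := ∃ ξ, ξ < β ∧ ∀ x ∈ AA mu C β, x ≤ ξ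

open scoped Classical in
def recipe (β : Ordinal) : Set Ordinal :=
  if Bdd mu C β then {γ | γ ∈ C β ∧ ∀ x ∈ AA mu C β, x ≤ γ}
  else AA mu C β ∪ {δ | δ ∈ C β ∧ IsAcc (AA mu C β) δ}

theorem AA_subset (β : Ordinal) : AA mu C β ⊆ C β := fun _ h => h.1

theorem recipe_subset (β : Ordinal) : recipe mu C β ⊆ C β := by
  unfold recipe; split
  · exact fun x hx => hx.1
  · rintro x (hx | hx); exacts [hx.1, hx.1]

theorem inter_Iio_coh {α β γ : Ordinal} (h : C α = C β ∩ Set.Iio α) (hγ : γ ≤ α) :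
    C α ∩ Set.Iio γ = C β ∩ Set.Iio γ := by
  rw [h]; ext x
  simp only [Set.mem_inter_iff, Set.mem_Iio, and_assoc]
  exact ⟨fun ⟨h1, _, h3⟩ => ⟨h1, h3⟩, fun ⟨h1, h3⟩ => ⟨h1, lt_of_lt_of_le h3 hγ, h3⟩⟩

theorem AA_coh {α β : Ordinal} (h : C α = C β ∩ Set.Iio α) :
    AA mu C α = AA mu C β ∩ Set.Iio α := by
  ext γ; constructor
  · rintro ⟨hγC, hdvd⟩
    have hγα : γ < α := (h ▸ hγC).2
    rw [inter_Iio_coh C h hγα.le] at hdvd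
    exact ⟨⟨(h ▸ hγC).1, hdvd⟩, hγα⟩
  · rintro ⟨⟨hγC, hdvd⟩, hγα⟩
    have hγCα : γ ∈ C α := h ▸ ⟨hγC, hγα⟩
    exact ⟨hγCα, by rw [inter_Iio_coh C h (le_of_lt hγα)]; exact hdvd⟩


theorem acc_of_acc_union {β : Ordinal} {δ : Ordinal}
    (h : IsAcc (AA mu C β ∪ {δ | δ ∈ C β ∧ IsAcc (AA mu C β) δ}) δ) : IsAcc (AA mu C β) δ := by
  refine ⟨h.1, fun γ hγ => ?_⟩
  obtain ⟨x, hx, h1, h2⟩ := h.2 γ hγ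
  rcases hx with hx | hx
  · exact ⟨x, hx, h1, h2⟩
  · obtain ⟨y, hy, hy1, hy2⟩ := hx.2.2 γ h1
    exact ⟨y, hy, hy1, hy2.trans h2⟩

theorem club_recipe {α : Ordinal} (hlim : Order.IsSuccLimit α) (hcl : IsClubIn (C α) α) :
    IsClubIn (recipe mu C α) α := by
  unfold recipe; split
  case isTrue hB =>
    obtain ⟨ξ, hξ, hb⟩ := hB
    refine ⟨fun x hx => hcl.1 x hx.1, fun γ hγ => ?_, fun δ hδ hacc => ?_⟩
    · obtain ⟨x, hx, hge⟩ := hcl.2.1 (max γ ξ) (max_lt hγ hξ)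
      exact ⟨x, ⟨hx, fun a ha => le_trans (le_trans (hb a ha) (le_max_right γ ξ)) hge⟩,
        le_trans (le_max_left γ ξ) hge⟩
    · have hδC : δ ∈ C α := hcl.2.2 δ hδ (isAcc_mono (fun x hx => hx.1) hacc)
      obtain ⟨y, hy, _, hyδ⟩ := hacc.2 0 hacc.1
      exact ⟨hδC, fun a ha => le_trans (hy.2 a ha) hyδ.le⟩
  case isFalse hB =>
    rw [Bdd] at hB
    push_neg at hB
    refine ⟨fun x hx => ?_, fun γ hγ => ?_, fun δ hδ hacc => ?_⟩
    · rcases hx with hx | hx; exacts [hcl.1 x hx.1, hcl.1 x hx.1]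
    · obtain ⟨x, hx, hgt⟩ := hB γ hγ
      exact ⟨x, Or.inl hx, hgt.le⟩
    · have haccA : IsAcc (AA mu C α) δ := acc_of_acc_union mu C hacc
      exact Or.inr ⟨hcl.2.2 δ hδ (isAcc_mono (AA_subset mu C α) haccA), haccA⟩

theorem coh_recipe {α β : Ordinal} (hcoh : C α = C β ∩ Set.Iio α) (hαβ : α < β)
    (hacc : IsAcc (recipe mu C β) α) : recipe mu C α = recipe mu C β ∩ Set.Iio α := by
  have hA : AA mu C α = AA mu C β ∩ Set.Iio α := AA_coh mu C hcoh
  by_cases hB : Bdd mu C β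
  · -- tail case
    obtain ⟨m, hm, _, hmα⟩ := hacc.2 0 hacc.1
    rw [recipe, if_pos hB] at hm
    have hAβ : ∀ x ∈ AA mu C β, x < α := fun x hx => lt_of_le_of_lt (hm.2 x hx) hmα
    have hAeq : AA mu C α = AA mu C β := by
      rw [hA]; exact Set.inter_eq_self_of_subset_left (fun x hx => hAβ x hx)
    have hBα : Bdd mu C α := ⟨m, hmα, fun x hx => hm.2 x (hAeq ▸ hx)⟩
    simp only [recipe]
    rw [if_pos hBα, if_pos hB, hAeq]
    ext γ
    simp only [Set.mem_setOf_eq, Set.mem_inter_iff, Set.mem_Iio, hcoh]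
    tauto
  · -- unbounded case
    rw [recipe, if_neg hB] at hacc
    have haccA : IsAcc (AA mu C β) α := acc_of_acc_union mu C hacc
    have hBα : ¬ Bdd mu C α := by
      rintro ⟨ξ, hξ, hb⟩
      obtain ⟨x, hx, h1, h2⟩ := haccA.2 ξ hξ
      exact absurd (hb x (hA ▸ ⟨hx, h2⟩)) (not_le.2 h1)
    have hacciff : ∀ δ < α, (IsAcc (AA mu C α) δ ↔ IsAcc (AA mu C β) δ) := by
      intro δ hδ
      constructor
      · exact isAcc_mono (by rw [hA]; exact Set.inter_subset_left)
      · rintro ⟨h0, hex⟩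
        refine ⟨h0, fun γ hγ => ?_⟩
        obtain ⟨x, hx, h1, h2⟩ := hex γ hγ
        exact ⟨x, hA ▸ ⟨hx, h2.trans hδ⟩, h1, h2⟩
    simp only [recipe, if_neg hB, if_neg hBα]
    ext δ
    simp only [Set.mem_union, Set.mem_setOf_eq, Set.mem_inter_iff, Set.mem_Iio]
    constructor
    · rintro (hδ | ⟨hδC, hδa⟩)
      · exact ⟨Or.inl (hA ▸ hδ).1, (hA ▸ hδ).2⟩
      · have hδα : δ < α := (hcoh ▸ hδC).2
        exact ⟨Or.inr ⟨(hcoh ▸ hδC).1, (hacciff δ hδα).1 hδa⟩, hδα⟩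
    · rintro ⟨hδ | ⟨hδC, hδa⟩, hδα⟩
      · exact Or.inl (hA ▸ ⟨hδ, hδα⟩)
      · exact Or.inr ⟨hcoh ▸ ⟨hδC, hδα⟩, (hacciff δ hδα).2 hδa⟩

open Ordinal Cardinal in
theorem avoid_main {α' β₀ : Ordinal} (hμ : ℵ₀ ≤ mu)
    (hcl : IsClubIn (C α') α')
    (hcoh : IsAcc (C α') β₀ → C β₀ = C α' ∩ Set.Iio β₀)
    (hβα : β₀ < α')
    (hacc : IsAcc (recipe mu C α') β₀)
    (hcof : β₀.cof = mu)
    (hBddβ : ∃ ξ, ξ < β₀ ∧ ∀ x ∈ AA mu C β₀, x ≤ ξ) : False := by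
  have haccC : IsAcc (C α') β₀ := isAcc_mono (recipe_subset mu C α') hacc
  by_cases hB : Bdd mu C α'
  case neg =>
    rw [recipe, if_neg hB] at hacc
    have haccA : IsAcc (AA mu C α') β₀ := acc_of_acc_union mu C hacc
    have hA : AA mu C β₀ = AA mu C α' ∩ Set.Iio β₀ := AA_coh mu C (hcoh haccC)
    obtain ⟨ξ, hξ, hb⟩ := hBddβ
    obtain ⟨x, hx, h1, h2⟩ := haccA.2 ξ hξ
    exact absurd (hb x (hA ▸ ⟨hx, h2⟩)) (not_le.2 h1)
  case pos =>
    rw [recipe, if_pos hB] at hacc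
    set W : Set Ordinal := C α' ∩ Set.Iio β₀ with hW
    set q : Ordinal.{1} := otp W with hq
    set M : Ordinal.{1} := Ordinal.lift.{1,0} mu.ord with hM
    have hM0 : M ≠ 0 := by
      intro hz
      rw [hM, Cardinal.lift_ord] at hz
      exact ne_of_gt (Cardinal.aleph0_pos.trans_le hμ)
        (Cardinal.lift_eq_zero.1 (Cardinal.ord_eq_zero.1 hz))
    have hqtype : q = Ordinal.type ((· < ·) : W → W → Prop) := rfl
    by_cases hdvd : M ∣ q
    · have hβC : β₀ ∈ C α' := hcl.2.2 β₀ hβα haccC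
      have hβA : β₀ ∈ AA mu C α' := ⟨hβC, hdvd⟩
      obtain ⟨m, hm, _, hmβ⟩ := hacc.2 0 hacc.1
      exact absurd (hm.2 β₀ hβA) (not_le.2 hmβ)
    · set ρ : Ordinal.{1} := q % M with hρ
      have hρ0 : ρ ≠ 0 := fun hz => hdvd (Ordinal.dvd_iff_mod_eq_zero.2 hz)
      have hqeq : M * (q / M) + ρ = q := Ordinal.div_add_mod q M
      set p : Ordinal.{1} := M * (q / M) with hp
      have hpq : p < q := by
        conv_rhs => rw [← hqeq]
        have : p + 0 < p + ρ :=
          (add_lt_add_iff_left p).2 (pos_iff_ne_zero.2 hρ0)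
        simpa using this
      obtain ⟨g, hg⟩ := Ordinal.typein_surj ((· < ·) : W → W → Prop) (hqtype ▸ hpq)
      have hgβ : (g : Ordinal) < β₀ := g.2.2
      have hgA : (g : Ordinal) ∈ AA mu C α' := by
        refine ⟨g.2.1, ?_⟩
        have hset : C α' ∩ Set.Iio (g : Ordinal)
            = (C α' ∩ Set.Iio β₀) ∩ Set.Iio (g : Ordinal) := by
          ext x
          simp only [Set.mem_inter_iff, Set.mem_Iio]
          exact ⟨fun ⟨h1, h2⟩ => ⟨⟨h1, h2.trans hgβ⟩, h2⟩, fun ⟨⟨h1, _⟩, h2⟩ => ⟨h1, h2⟩⟩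
        rw [hset, ← typein_eq_otp, hg, hp]
        exact dvd_mul_right M (q / M)
      set ι : Type 1 := ↥({γ | γ ∈ C α' ∧ ∀ x ∈ AA mu C α', x ≤ γ} ∩ Set.Iio β₀) with hι
      set emb : ι → ↥W := fun y => ⟨y.1, y.2.1.1, y.2.2⟩ with hemb
      have hple : ∀ y : ι, p ≤ Ordinal.typein ((· < ·) : W → W → Prop) (emb y) := by
        intro y
        rw [← hg, Ordinal.typein_le_typein]
        intro hlt
        have hlt' : y.1 < (g : Ordinal) := hlt
        exact absurd (y.2.1.2 _ hgA) (not_le.2 hlt')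
      set f : ι → Ordinal.{1} :=
        fun y => Ordinal.typein ((· < ·) : W → W → Prop) (emb y) - p with hf
      have hfρ : ∀ y, f y < ρ := fun y => by
        rw [hf]
        exact (Ordinal.sub_lt_of_le (hple y)).2
          (by rw [hqeq]; exact hqtype ▸ Ordinal.typein_lt_type _ _)
      have hfinj : Function.Injective f := by
        intro y y' he
        have h1 : Ordinal.typein ((· < ·) : W → W → Prop) (emb y)
            = Ordinal.typein ((· < ·) : W → W → Prop) (emb y') := by
          have e1 := Ordinal.add_sub_cancel_of_le (hple y)
          have e2 := Ordinal.add_sub_cancel_of_le (hple y')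
          rw [← e1, ← e2]
          simp only [hf] at he
          rw [he]
        have h2 := Ordinal.typein_injective _ h1
        exact Subtype.ext (by simpa [hemb] using congrArg Subtype.val h2)
      have hcard : Cardinal.mk ι ≤ ρ.card := by
        have hinj : Function.Injective (fun y : ι => Ordinal.ToType.mk ⟨f y, hfρ y⟩) := by
          intro y y' he
          apply hfinj
          exact congrArg Subtype.val ((Ordinal.ToType.mk (o := ρ)).injective he)
        simpa [Cardinal.mk_toType] using Cardinal.mk_le_of_injective hinj
      have hρcard : ρ.card < Cardinal.lift.{1,0} mu := by
        apply Cardinal.lt_ord.1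
        rw [← Cardinal.lift_ord]
        exact Ordinal.mod_lt q hM0
      have hlsub : Ordinal.lsub.{1,1} (fun y : ι => Ordinal.lift.{1,0} y.1) = Ordinal.lift.{1,0} β₀ := by
        apply le_antisymm
        · exact Ordinal.lsub_le.{1,1} fun y => Ordinal.lift_lt.2 y.2.2
        · by_contra hlt
          push_neg at hlt
          obtain ⟨c, hcβ, hcl2⟩ := Ordinal.lt_lift_iff.1 hlt
          obtain ⟨x, hx, hx1, hx2⟩ := hacc.2 c hcβ
          have := Ordinal.lt_lsub.{1,1} (fun y : ι => Ordinal.lift.{1,0} y.1) ⟨x, hx, hx2⟩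
          rw [← hcl2] at this
          exact absurd (Ordinal.lift_lt.1 this) (not_lt.2 hx1.le)
      have hcof2 : Cardinal.lift.{1,0} β₀.cof ≤ Cardinal.mk ι := by
        have h3 := Ordinal.cof_lsub_le.{1} (fun y : ι => Ordinal.lift.{1,0} y.1)
        rw [hlsub] at h3
        rwa [Ordinal.lift_cof]
      have : Cardinal.lift.{1,0} mu < Cardinal.lift.{1,0} mu :=
        calc Cardinal.lift.{1,0} mu = Cardinal.lift.{1,0} β₀.cof := by rw [hcof]
          _ ≤ Cardinal.mk ι := hcof2
          _ ≤ ρ.card := hcard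
          _ < Cardinal.lift.{1,0} mu := hρcard
      exact absurd this (lt_irrefl _)

end Stmt13Aux

/-- For infinite regular `μ < κ`: if `□^μ(κ)` holds, then there is a stationary
`S ⊆ S^κ_μ` such that `□(κ, S)` holds. -/
theorem stmt_13 (μ κ : Cardinal) (hμ : μ.IsRegular) (hκ : κ.IsRegular) (hlt : μ < κ)
    (h : SqMu μ κ.ord) :
    ∃ S : Set Ordinal, S ⊆ {α | α < κ.ord ∧ α.cof = μ} ∧
      IsStationaryIn S κ.ord ∧ SqAvoid κ.ord S := by
  classical
  obtain ⟨C, hC, hstat⟩ := h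
  refine ⟨_, fun α hα => ⟨hα.1, hα.2.1⟩, hstat, ?_⟩
  set D : Ordinal → Set Ordinal :=
    fun β => if β < κ.ord then Stmt13Aux.recipe μ C β else ∅ with hD
  have hκlim : Order.IsSuccLimit (κ.ord) := Cardinal.isSuccLimit_ord hκ.aleph0_le
  refine ⟨D, ⟨⟨?_, ?_⟩, ?_⟩, ?_⟩
  · -- clubness
    intro α hα hlim
    simp only [hD]
    rw [if_pos hα]
    exact Stmt13Aux.club_recipe μ C hlim (hC.1.1 α hα hlim)
  · -- coherence
    intro α β hβ hαβ hacc
    have hαlt : α < κ.ord := hαβ.trans hβ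
    simp only [hD] at hacc ⊢
    rw [if_pos hβ] at hacc
    rw [if_pos hβ, if_pos hαlt]
    have haccC : IsAcc (C β) α := Stmt13Aux.isAcc_mono (Stmt13Aux.recipe_subset μ C β) hacc
    exact Stmt13Aux.coh_recipe μ C (hC.1.2 α β hβ hαβ haccC) hαβ hacc
  · -- no thread
    rintro ⟨T, hTclub, hTcoh⟩
    have haccT : IsAcc T κ.ord := by
      refine ⟨hκlim.pos, fun γ hγ => ?_⟩
      obtain ⟨x, hx, hge⟩ := hTclub.2.1 (Order.succ γ) (hκlim.succ_lt hγ)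
      exact ⟨x, hx, lt_of_lt_of_le (Order.lt_succ γ) hge, hTclub.1 x hx⟩
    have hT0 := hTcoh κ.ord haccT
    simp only [hD] at hT0
    rw [if_neg (lt_irrefl κ.ord)] at hT0
    obtain ⟨x, hx, _⟩ := hTclub.2.1 0 hκlim.pos
    have hmem : x ∈ T ∩ Set.Iio κ.ord := ⟨hx, hTclub.1 x hx⟩
    rw [hT0] at hmem
    exact hmem
  · -- avoidance
    intro α hα hlim β hβα hacc hβS
    simp only [hD] at hacc
    rw [if_pos hα] at hacc
    obtain ⟨hβκ, hcof, hbdd⟩ := hβS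
    refine Stmt13Aux.avoid_main μ C hμ.aleph0_le (hC.1.1 α hα hlim) ?_ hβα hacc hcof ?_
    · exact fun haccC => hC.1.2 β α hα hβα haccC
    · obtain ⟨ξ, hξ, hb⟩ := hbdd
      exact ⟨ξ, hξ, fun x hx => hb x hx.1 hx.2⟩
end

section
/- Let κ be a regular uncountable cardinal. If there is a stationary S ⊆ S^κ_ω such that □(κ, S) holds, then □^ω(κ) holds. (Replace C_α for α ∈ S by any ω-type cofinal subset of α; coherence is preserved since the original sequence avoids S.) -/
section Aux

open Ordinal Cardinal Set

/-- Any accumulation point is a limit ordinal. -/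
lemma isLimit_of_isAcc {X : Set Ordinal} {δ : Ordinal} (h : IsAcc X δ) : Order.IsSuccLimit δ := by
  rcases Ordinal.zero_or_succ_or_isSuccLimit δ with h0 | ⟨a, rfl⟩ | hl
  · exact absurd h.1 (by simp [h0])
  · obtain ⟨x, _, hx1, hx2⟩ := h.2 a (Order.lt_succ a)
    exact absurd (Order.lt_succ_iff.mp hx2) (not_le.mpr hx1)
  · exact hl

lemma ord_lt_add_one (a : Ordinal) : a < a + 1 := by
  rw [Ordinal.add_one_eq_succ]; exact Order.lt_succ a

/-- If `δ` is an accumulation point of the range of a strictly monotone `ℕ`-sequence,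
then `δ` is above every term of the sequence. -/
lemma seq_lt_of_acc {f : ℕ → Ordinal} (hf : StrictMono f) {δ : Ordinal}
    (h : IsAcc (Set.range f) δ) : ∀ n, f n < δ := by
  by_contra hcon
  push_neg at hcon
  have hex : ∃ n, δ ≤ f n := hcon
  classical
  cases hfind : Nat.find hex with
  | zero =>
    obtain ⟨x, ⟨m, rfl⟩, _, hx2⟩ := h.2 0 h.1
    have hs : δ ≤ f (Nat.find hex) := Nat.find_spec hex
    rw [hfind] at hs
    exact absurd hx2 (not_lt.mpr (hs.trans (hf.monotone (Nat.zero_le m))))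
  | succ k =>
    have hk : f k < δ := by
      by_contra hge
      have := Nat.find_min' hex (not_lt.mp hge)
      omega
    obtain ⟨x, ⟨m, rfl⟩, hx1, hx2⟩ := h.2 (f k) hk
    have h1 : k < m := hf.lt_iff_lt.mp hx1
    have hs : δ ≤ f (Nat.find hex) := Nat.find_spec hex
    rw [hfind] at hs
    have h2 : m < k + 1 := hf.lt_iff_lt.mp (lt_of_lt_of_le hx2 hs)
    omega

/-- The range of a strictly monotone unbounded `ℕ`-sequence has no accumulation
points below `α`. -/
lemma range_no_acc {f : ℕ → Ordinal} {α : Ordinal} (hm : StrictMono f)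
    (hu : ∀ γ < α, ∃ n, γ ≤ f n) : ∀ δ < α, ¬ IsAcc (Set.range f) δ := by
  intro δ hδ hacc
  obtain ⟨n, hn⟩ := hu δ hδ
  exact absurd (seq_lt_of_acc hm hacc n) (not_lt.mpr hn)

lemma range_club {f : ℕ → Ordinal} {α : Ordinal} (hm : StrictMono f)
    (hb : ∀ n, f n < α) (hu : ∀ γ < α, ∃ n, γ ≤ f n) : IsClubIn (Set.range f) α := by
  refine ⟨?_, ?_, ?_⟩
  · rintro x ⟨n, rfl⟩; exact hb n
  · intro γ hγ; obtain ⟨n, hn⟩ := hu γ hγ; exact ⟨f n, ⟨n, rfl⟩, hn⟩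
  · intro δ hδ hacc; exact absurd hacc (range_no_acc hm hu δ hδ)

lemma empty_no_acc {δ : Ordinal} (h : IsAcc (∅ : Set Ordinal) δ) : False := by
  obtain ⟨x, hx, _⟩ := h.2 0 h.1
  exact hx

/-- The order type of a finite set of ordinals is less than `ω`. -/
lemma otp_lt_omega {X : Set Ordinal} (h : X.Finite) : otp X < Ordinal.omega0 := by
  haveI := h.fintype
  rw [otp, Ordinal.type_fintype]
  exact Ordinal.nat_lt_omega0 _

lemma otp_ne_zero {X : Set Ordinal} {x : Ordinal} (hx : x ∈ X) : otp X ≠ 0 := by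
  rw [otp, Ne, Ordinal.type_eq_zero_iff_isEmpty]
  exact fun h => h.elim ⟨x, hx⟩

/-- A fundamental `ω`-sequence for a limit ordinal of countable cofinality. -/
lemma exists_omega_seq {α : Ordinal.{0}} (hl : Order.IsSuccLimit α) (hc : α.cof = Cardinal.aleph0) :
    ∃ f : ℕ → Ordinal, StrictMono f ∧ (∀ n, f n < α) ∧ ∀ γ < α, ∃ n, γ ≤ f n := by
  obtain ⟨ι, g, hg, hι⟩ := Ordinal.exists_lsub_cof α
  rw [hc] at hι
  obtain ⟨e⟩ := Cardinal.eq.mp (hι.trans (Cardinal.mk_eq_aleph0 ℕ).symm)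
  set g' : ℕ → Ordinal := g ∘ e.symm with hg'
  have hg'lt : ∀ n, g' n < α := fun n => hg ▸ Ordinal.lt_lsub g (e.symm n)
  have hg'ub : ∀ γ < α, ∃ n, γ ≤ g' n := by
    intro γ hγ
    rw [← hg] at hγ
    obtain ⟨i, hi⟩ := Ordinal.lt_lsub_iff.mp hγ
    exact ⟨e i, by simpa [hg'] using hi⟩
  set F : ℕ → Ordinal := fun n => Nat.rec (g' 0) (fun n p => max p (g' (n + 1)) + 1) n with hF
  have hFs : ∀ n, F (n + 1) = max (F n) (g' (n + 1)) + 1 := fun n => rfl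
  have hmono : StrictMono F := by
    apply strictMono_nat_of_lt_succ
    intro n
    rw [hFs n]
    exact lt_of_le_of_lt (le_max_left _ _) (ord_lt_add_one _)
  have hFlt : ∀ n, F n < α := by
    intro n
    induction n with
    | zero => exact hg'lt 0
    | succ k ih =>
      rw [hFs k, Ordinal.add_one_eq_succ]
      exact hl.succ_lt (max_lt ih (hg'lt (k + 1)))
  have hgF : ∀ n, g' n ≤ F n := by
    intro n
    cases n with
    | zero => exact le_rfl
    | succ k => rw [hFs k]; exact (le_max_right _ _).trans (ord_lt_add_one _).le
  exact ⟨F, hmono, hFlt, fun γ hγ => (hg'ub γ hγ).imp fun n hn => hn.trans (hgF n)⟩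

end Aux

/-- If there is a stationary `S ⊆ S^κ_ω` such that `□(κ, S)` holds, then
`□^ω(κ)` holds. -/
theorem stmt_14 (κ : Cardinal) (hκ : κ.IsRegular) (huc : Cardinal.aleph0 < κ)
    (S : Set Ordinal) (hSsub : S ⊆ {α | α < κ.ord ∧ α.cof = Cardinal.aleph0})
    (hSst : IsStationaryIn S κ.ord) (hsq : SqAvoid κ.ord S) :
    SqMu Cardinal.aleph0 κ.ord := by
  classical
  obtain ⟨C, hCsq, hCav⟩ := hsq
  have hSlim : ∀ α ∈ S, Order.IsSuccLimit α ∧ α.cof = Cardinal.aleph0 ∧ α < κ.ord := by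
    intro α hα
    obtain ⟨h1, h2⟩ := hSsub hα
    refine ⟨?_, h2, h1⟩
    rcases Ordinal.zero_or_succ_or_isSuccLimit α with h | ⟨a, rfl⟩ | h
    · rw [h, Ordinal.cof_zero] at h2; exact absurd h2.symm Cardinal.aleph0_ne_zero
    · rw [Ordinal.cof_succ] at h2
      exact absurd h2.symm Cardinal.one_lt_aleph0.ne'
    · exact h
  have hfseq : ∀ α, α ∈ S → ∃ f : ℕ → Ordinal, StrictMono f ∧ (∀ n, f n < α) ∧
      ∀ γ < α, ∃ n, γ ≤ f n :=
    fun α hα => exists_omega_seq (hSlim α hα).1 (hSlim α hα).2.1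
  choose f hf1 hf2 hf3 using hfseq
  set D : Ordinal → Set Ordinal := fun α =>
    if hl : Order.IsSuccLimit α then (if hs : α ∈ S then Set.range (f α hs) else C α) else ∅ with hD
  have hDS : ∀ α (hs : α ∈ S), D α = Set.range (f α hs) := by
    intro α hs
    simp only [hD]
    rw [dif_pos (hSlim α hs).1, dif_pos hs]
  have hDC : ∀ α, Order.IsSuccLimit α → α ∉ S → D α = C α := by
    intro α hl hs
    simp only [hD]
    rw [dif_pos hl, dif_neg hs]
  have hDE : ∀ α, ¬ Order.IsSuccLimit α → D α = ∅ := by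
    intro α hl
    simp only [hD]
    rw [dif_neg hl]
  have hklim : Order.IsSuccLimit κ.ord := Cardinal.isSuccLimit_ord huc.le
  -- no accumulation points of `D β` below `β` when `β ∈ S`
  have hSnoacc : ∀ β (hs : β ∈ S), ∀ δ < β, ¬ IsAcc (D β) δ := by
    intro β hs δ hδ hacc
    rw [hDS β hs] at hacc
    exact range_no_acc (hf1 β hs) (hf3 β hs) δ hδ hacc
  -- key analysis of an accumulation point situation
  have hkey : ∀ α β, β < κ.ord → α < β → IsAcc (D β) α →
      Order.IsSuccLimit β ∧ β ∉ S ∧ Order.IsSuccLimit α ∧ α ∉ S ∧ IsAcc (C β) α := by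
    intro α β hβ hαβ hacc
    have hβlim : Order.IsSuccLimit β := by
      by_contra h
      rw [hDE β h] at hacc
      exact empty_no_acc hacc
    have hβS : β ∉ S := fun hs => hSnoacc β hs α hαβ hacc
    rw [hDC β hβlim hβS] at hacc
    have hαlim : Order.IsSuccLimit α := isLimit_of_isAcc hacc
    exact ⟨hβlim, hβS, hαlim, hCav β hβ hβlim α hαβ hacc, hacc⟩
  -- D is coherent
  have hDcoh : Coherent κ.ord D := by
    constructor
    · intro α hα hl
      by_cases hs : α ∈ S
      · rw [hDS α hs]
        exact range_club (hf1 α hs) (hf2 α hs) (hf3 α hs)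
      · rw [hDC α hl hs]
        exact hCsq.1.1 α hα hl
    · intro α β hβ hαβ hacc
      obtain ⟨hβlim, hβS, hαlim, hαS, hacc'⟩ := hkey α β hβ hαβ hacc
      rw [hDC β hβlim hβS, hDC α hαlim hαS]
      exact hCsq.1.2 α β hβ hαβ hacc'
  -- D has no thread
  have hDth : ¬ ∃ T, IsThread κ.ord D T := by
    rintro ⟨T, hTclub, hTcoh⟩
    have hTsub := hTclub.1
    have hTub := hTclub.2.1
    have hub' : ∀ γ < κ.ord, ∃ x ∈ T, γ < x := by
      intro γ hγ
      obtain ⟨x, hx, hge⟩ := hTub (γ + 1) (by rw [Ordinal.add_one_eq_succ]; exact hklim.succ_lt hγ)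
      exact ⟨x, hx, lt_of_lt_of_le (ord_lt_add_one γ) hge⟩
    -- accumulation points of T are unbounded in κ.ord
    have haccub : ∀ γ < κ.ord, ∃ β, γ < β ∧ β < κ.ord ∧ IsAcc T β := by
      intro γ hγ
      have hstep : ∀ x, x ∈ T → ∃ y, y ∈ T ∧ x < y :=
        fun x hx => by obtain ⟨y, hy, hxy⟩ := hub' x (hTsub x hx); exact ⟨y, hy, hxy⟩
      choose st hst1 hst2 using hstep
      obtain ⟨x0, hx0, hgt0⟩ := hub' γ hγ
      let g : ℕ → {x : Ordinal // x ∈ T} := fun n =>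
        Nat.rec ⟨x0, hx0⟩ (fun _ p => ⟨st p.val p.property, hst1 p.val p.property⟩) n
      have hgsucc : ∀ n, g (n + 1) = ⟨st (g n).val (g n).property, hst1 (g n).val (g n).property⟩ :=
        fun n => rfl
      have hgmono : ∀ n, (g n).val < (g (n + 1)).val := by
        intro n
        rw [hgsucc n]
        exact hst2 (g n).val (g n).property
      set β := ⨆ n, (g n).val with hβ
      have hβlt : β < κ.ord := by
        refine Ordinal.iSup_lt_ord ?_ (fun n => hTsub _ (g n).2)
        rw [hκ.cof_eq, Cardinal.mk_eq_aleph0 ℕ]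
        exact huc
      have hle : ∀ n, (g n).val < β :=
        fun n => lt_of_lt_of_le (hgmono n) (Ordinal.le_iSup (fun n => (g n).val) (n + 1))
      have hacc : IsAcc T β := by
        refine ⟨lt_of_le_of_lt zero_le (hle 0), ?_⟩
        intro δ hδ
        obtain ⟨n, hn⟩ := Ordinal.lt_iSup_iff.mp hδ
        exact ⟨(g n).val, (g n).property, hn, hle n⟩
      exact ⟨β, lt_of_lt_of_le hgt0 (Ordinal.le_iSup (fun n => (g n).val) 0), hβlt, hacc⟩
    have hkS : κ.ord ∉ S := fun h => absurd (hSsub h).1 (lt_irrefl _)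
    have key : ∀ α, IsAcc T α → T ∩ Set.Iio α = C α := by
      intro α hacc
      have hα : α ≤ κ.ord := by
        by_contra h
        push_neg at h
        obtain ⟨x, hx, h1, _⟩ := hacc.2 κ.ord h
        exact absurd (hTsub x hx) (not_lt.mpr h1.le)
      have hDα := hTcoh α hacc
      rcases lt_or_eq_of_le hα with hlt | rfl
      · obtain ⟨β, hαβ, hβκ, haccβ⟩ := haccub α hlt
        have hDβ := hTcoh β haccβ
        have haccD : IsAcc (D β) α := by
          rw [← hDβ]
          refine ⟨hacc.1, ?_⟩
          intro δ hδ
          obtain ⟨x, hx, h1, h2⟩ := hacc.2 δ hδ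
          exact ⟨x, ⟨hx, h2.trans hαβ⟩, h1, h2⟩
        obtain ⟨_, _, hαlim, hαS, _⟩ := hkey α β hβκ hαβ haccD
        rw [hDα, hDC α hαlim hαS]
      · rw [hDα, hDC κ.ord hklim hkS]
    exact hCsq.2 ⟨T, hTclub, key⟩
  refine ⟨D, ⟨hDcoh, hDth⟩, ?_⟩
  -- stationarity
  intro Cl hCl
  obtain ⟨α, hαS, hαC⟩ := hSst Cl hCl
  refine ⟨α, ⟨(hSlim α hαS).2.2, (hSlim α hαS).2.1, ?_⟩, hαC⟩
  refine ⟨f α hαS 0, hf2 α hαS 0, ?_⟩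
  intro γ hγ hdvd
  rw [hDS α hαS] at hγ
  obtain ⟨n, rfl⟩ := hγ
  by_contra h
  push_neg at h
  have hfin : (D α ∩ Set.Iio (f α hαS n)).Finite := by
    apply Set.Finite.subset ((Set.finite_Iio n).image (f α hαS))
    rintro x ⟨hx1, hx2⟩
    rw [hDS α hαS] at hx1
    obtain ⟨m, rfl⟩ := hx1
    exact ⟨m, (hf1 α hαS).lt_iff_lt.mp hx2, rfl⟩
  have h1 : otp (D α ∩ Set.Iio (f α hαS n)) < Ordinal.omega0 := otp_lt_omega hfin
  have h2 : otp (D α ∩ Set.Iio (f α hαS n)) ≠ 0 := by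
    apply otp_ne_zero (x := f α hαS 0)
    exact ⟨by rw [hDS α hαS]; exact ⟨0, rfl⟩, h⟩
  rw [Cardinal.ord_aleph0, Ordinal.lift_omega0] at hdvd
  obtain ⟨c, hc⟩ := hdvd
  rcases eq_or_ne c 0 with rfl | hc0
  · rw [mul_zero] at hc
    exact h2 hc
  · have : Ordinal.omega0 * c < Ordinal.omega0 * 1 := by
      rw [mul_one, ← hc]
      exact h1
    have := (mul_lt_mul_iff_of_pos_left Ordinal.omega0_pos).mp this
    rw [Ordinal.lt_one_iff_zero] at this
    exact hc0 this
end

section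
/- Let μ < ν < κ be infinite regular cardinals. If ⟨C_α⟩ is a □(κ)-sequence with T₀ = {α < κ | otp(C_α) = ν} stationary, then T₁ = {α ∈ S^κ_μ | otp(C_α) < ν} is also stationary. -/
open Ordinal Set Cardinal

open scoped Classical in
noncomputable def pickFn (Q : Ordinal.{0} → Ordinal.{0} → Prop) (β : Ordinal) (s : Ordinal) : Ordinal :=
  if h : ∃ x, s < x ∧ x < β ∧ Q s x then h.choose else 0

theorem pickFn_spec {Q : Ordinal.{0} → Ordinal.{0} → Prop} {β s : Ordinal}
    (h : ∃ x, s < x ∧ x < β ∧ Q s x) :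
    s < pickFn Q β s ∧ pickFn Q β s < β ∧ Q s (pickFn Q β s) := by
  rw [pickFn]
  rw [dif_pos h]
  exact h.choose_spec

noncomputable def seqFn (Q : Ordinal.{0} → Ordinal.{0} → Prop) (β γ₀ : Ordinal) : Ordinal → Ordinal :=
  Ordinal.lt_wf.fix fun i ih => pickFn Q β (max γ₀ (Ordinal.blsub.{0,0} i fun j hj => ih j hj))

theorem seqFn_eq (Q : Ordinal.{0} → Ordinal.{0} → Prop) (β γ₀ i : Ordinal) :
    seqFn Q β γ₀ i = pickFn Q β (max γ₀ (Ordinal.blsub.{0,0} i fun j _ => seqFn Q β γ₀ j)) := by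
  rw [seqFn, WellFounded.fix_eq]

theorem cof_le_cof_blsub {θ : Ordinal} (f : ∀ j < θ, Ordinal)
    (hmono : ∀ i j (hi : i < θ) (hj : j < θ), i < j → f i hi < f j hj) :
    θ.cof ≤ (Ordinal.blsub.{0,0} θ f).cof := by
  rw [le_cof_iff_lsub]
  intro ι g hg
  have hne : ∀ i : ι, {j | ∃ hj : j < θ, g i ≤ f j hj}.Nonempty := by
    intro i
    have : g i < Ordinal.blsub.{0,0} θ f := hg ▸ Ordinal.lt_lsub g i
    obtain ⟨j, hj, hle⟩ := Ordinal.lt_blsub_iff.1 this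
    exact ⟨j, hj, hle⟩
  set h : ι → Ordinal := fun i => sInf {j | ∃ hj : j < θ, g i ≤ f j hj} with hh
  have hmem : ∀ i, h i ∈ {j | ∃ hj : j < θ, g i ≤ f j hj} := fun i => csInf_mem (hne i)
  have hlsub : Ordinal.lsub h = θ := by
    apply le_antisymm (Ordinal.lsub_le fun i => (hmem i).1)
    by_contra hlt
    push_neg at hlt
    have h1 : f (Ordinal.lsub h) hlt < Ordinal.blsub.{0,0} θ f := Ordinal.lt_blsub f _ hlt
    rw [← hg] at h1
    obtain ⟨i, hile⟩ := Ordinal.lt_lsub_iff.1 h1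
    obtain ⟨hhi, hgi⟩ := hmem i
    have hle2 : f (Ordinal.lsub h) hlt ≤ f (h i) hhi := hile.trans hgi
    have : Ordinal.lsub h ≤ h i := by
      by_contra hc
      push_neg at hc
      exact absurd (hmono _ _ hhi hlt hc) (not_lt.2 hle2)
    exact absurd (Ordinal.lt_lsub h i) (not_lt.2 this)
  calc θ.cof = (Ordinal.lsub h).cof := by rw [hlsub]
    _ ≤ #ι := Ordinal.cof_lsub_le h

theorem master {Q : Ordinal.{0} → Ordinal.{0} → Prop} {β γ₀ θ : Ordinal} (hθ : Order.IsSuccLimit θ)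
    (hθcof : θ.card < β.cof)
    (hStep : ∀ s < β, ∃ x, s < x ∧ x < β ∧ Q s x) (hγ₀ : γ₀ < β) :
    ∃ α, γ₀ < α ∧ α < β ∧
      (∀ γ < α, ∃ s x, γ ≤ s ∧ s < x ∧ x < α ∧ Q s x) ∧
      θ.cof ≤ α.cof ∧ α.cof ≤ θ.card := by
  set f := seqFn Q β γ₀ with hf
  have key : ∀ i < θ, max γ₀ (Ordinal.blsub.{0,0} i fun j _ => f j) < f i ∧ f i < β ∧
      Q (max γ₀ (Ordinal.blsub.{0,0} i fun j _ => f j)) (f i) := by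
    intro i
    induction i using Ordinal.induction with
    | h i IH =>
      intro hiθ
      have hs : max γ₀ (Ordinal.blsub.{0,0} i fun j _ => f j) < β := by
        apply max_lt hγ₀
        exact Ordinal.blsub_lt_ord
          (lt_of_le_of_lt (Ordinal.card_le_card hiθ.le) hθcof)
          (fun j hj => (IH j hj (hj.trans hiθ)).2.1)
      have hspec := pickFn_spec (hStep _ hs)
      rw [hf, seqFn_eq]
      exact hspec
  set α := Ordinal.blsub.{0,0} θ (fun j _ => f j) with hα
  have hαβ : α < β := Ordinal.blsub_lt_ord hθcof (fun j hj => (key j hj).2.1)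
  have hγα : γ₀ < α := by
    have h0 : γ₀ < f 0 := (le_max_left _ _).trans_lt (key 0 hθ.pos).1
    exact h0.trans (Ordinal.lt_blsub _ 0 hθ.pos)
  refine ⟨α, hγα, hαβ, ?_, ?_, ?_⟩
  · intro γ hγ
    obtain ⟨j, hj, hγj⟩ := Ordinal.lt_blsub_iff.1 hγ
    have hsj := key _ (hθ.succ_lt hj)
    refine ⟨max γ₀ (Ordinal.blsub.{0,0} (Order.succ j) fun j' _ => f j'), f (Order.succ j),
      ?_, hsj.1, Ordinal.lt_blsub _ _ (hθ.succ_lt hj), hsj.2.2⟩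
    exact le_of_lt (lt_of_le_of_lt hγj ((Ordinal.lt_blsub (fun j' _ => f j') j
      (Order.lt_succ j)).trans_le (le_max_right _ _)))
  · exact cof_le_cof_blsub _ (fun i' j' hi' hj' hij =>
      lt_of_lt_of_le (Ordinal.lt_blsub (fun j'' _ => f j'') i' hij)
        ((le_max_right _ _).trans (key j' hj').1.le))
  · exact Ordinal.cof_blsub_le _



theorem otp_inter_Iio_lt {Y : Set Ordinal} {x α : Ordinal} (hx : x ∈ Y) (hαx : α ≤ x) :
    otp (Y ∩ Set.Iio α) < otp Y := by
  have key : otp (Y ∩ Set.Iio α) ≤ Ordinal.typein ((· < ·) : Y → Y → Prop) ⟨x, hx⟩ := by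
    rw [← Ordinal.type_subrel ((· < ·) : Y → Y → Prop) ⟨x, hx⟩]
    refine RelEmbedding.ordinal_type_le ?_
    refine RelEmbedding.ofMonotone (fun y => ⟨⟨y.1, y.2.1⟩, (lt_of_lt_of_le y.2.2 hαx : y.1 < x)⟩) ?_
    intro a b hab
    exact hab
  exact key.trans_lt (Ordinal.typein_lt_type _ _)

theorem stmt_15' (μ ν κ : Cardinal) (hμ : μ.IsRegular) (hν : ν.IsRegular)
    (hκ : κ.IsRegular) (h₁ : μ < ν) (h₂ : ν < κ)
    (C : Ordinal → Set Ordinal) (hsq : SqSeq κ.ord C)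
    (hT₀ : IsStationaryIn
      {α | α < κ.ord ∧ Order.IsSuccLimit α ∧ otp (C α) = Ordinal.lift.{1,0} ν.ord} κ.ord) :
    IsStationaryIn
      {α | α < κ.ord ∧ α.cof = μ ∧ otp (C α) < Ordinal.lift.{1,0} ν.ord} κ.ord := by
  obtain ⟨hCoh, -⟩ := hsq
  intro E hE
  have hκcof : κ.ord.cof = κ := hκ.cof_eq
  have hκlim : Order.IsSuccLimit κ.ord := Cardinal.isSuccLimit_ord hκ.aleph0_le
  have hℵ₀κ : ℵ₀ < κ := lt_of_le_of_lt hμ.aleph0_le (h₁.trans h₂)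
  -- the set of accumulation points of E is club in κ.ord
  have hA : IsClubIn {δ | δ < κ.ord ∧ IsAcc E δ} κ.ord := by
    refine ⟨fun x hx => hx.1, ?_, ?_⟩
    · intro γ hγ
      have hstep : ∀ s < κ.ord, ∃ x, s < x ∧ x < κ.ord ∧ x ∈ E := by
        intro s hs
        obtain ⟨x, hxE, hsx⟩ := hE.2.1 (Order.succ s) (hκlim.succ_lt hs)
        exact ⟨x, (Order.lt_succ s).trans_le hsx, hE.1 x hxE, hxE⟩
      obtain ⟨α, hγα, hακ, hacc, -⟩ := master (Q := fun _ x => x ∈ E)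
        Ordinal.isSuccLimit_omega0 (by rw [Ordinal.card_omega0, hκcof]; exact hℵ₀κ) hstep hγ
      refine ⟨α, ⟨hακ, lt_of_le_of_lt (zero_le (a := γ)) hγα, ?_⟩, hγα.le⟩
      intro γ' hγ'
      obtain ⟨s, x, hγs, hsx, hxα, hxE⟩ := hacc γ' hγ'
      exact ⟨x, hxE, hγs.trans_lt hsx, hxα⟩
    · intro δ hδκ hδacc
      refine ⟨hδκ, hδacc.1, ?_⟩
      intro γ hγ
      obtain ⟨x, hxA, hγx, hxδ⟩ := hδacc.2 γ hγ
      obtain ⟨e, heE, hγe, hex⟩ := hxA.2.2 γ hγx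
      exact ⟨e, heE, hγe, hex.trans hxδ⟩
  obtain ⟨β, ⟨hβκ, hβlim, hβotp⟩, -, hβaccE⟩ := hT₀ _ hA
  have hCβ : IsClubIn (C β) β := hCoh.1 β hβκ hβlim
  -- μ < cof β
  have hμβ : μ < β.cof := by
    by_contra hle
    push_neg at hle
    obtain ⟨ι, g, hg, hgcard⟩ := Ordinal.exists_lsub_cof β
    have hpick : ∀ i : ι, ∃ x, x ∈ C β ∧ g i ≤ x := by
      intro i
      obtain ⟨x, hx, hgx⟩ := hCβ.2.1 (g i) (hg ▸ Ordinal.lt_lsub g i)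
      exact ⟨x, hx, hgx⟩
    choose c hc hgc using hpick
    set h : ι → Ordinal.{1} :=
      fun i => Ordinal.typein ((· < ·) : ↥(C β) → ↥(C β) → Prop)
        ⟨c i, hc i⟩ with hh
    have hlsub : Ordinal.lsub.{0,1} h = otp (C β) := by
      apply le_antisymm (Ordinal.lsub_le fun i => Ordinal.typein_lt_type _ _)
      by_contra hlt
      push_neg at hlt
      obtain ⟨y, hy⟩ := (Ordinal.mem_range_typein_iff
        ((· < ·) : ↥(C β) → ↥(C β) → Prop)).2 hlt
      have hyβ : (y : Ordinal) < β := hCβ.1 y.1 y.2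
      have hyβ' : (y : Ordinal) < Ordinal.lsub g := by rw [hg]; exact hyβ
      obtain ⟨i, hyi⟩ := Ordinal.lt_lsub_iff.1 hyβ'
      have h1 : h i < Ordinal.typein
          ((· < ·) : ↥(C β) → ↥(C β) → Prop) y := by
        rw [hy]; exact Ordinal.lt_lsub h i
      rw [hh] at h1
      have h2 : (⟨c i, hc i⟩ : ↥(C β)) < y := (Ordinal.typein_lt_typein _).1 h1
      exact absurd (hyi.trans (hgc i)) (not_le.2 h2)
    have hcle : (Ordinal.lsub.{0,1} h).cof ≤ Cardinal.lift.{1,0} (Cardinal.mk ι) :=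
      Ordinal.cof_lsub_le_lift h
    rw [hlsub, hβotp, ← Ordinal.lift_cof, hν.cof_eq, hgcard] at hcle
    exact absurd ((Cardinal.lift_le.1 hcle).trans hle) (not_le.2 h₁)
  -- build α below β
  have hstep2 : ∀ s < β, ∃ x, s < x ∧ x < β ∧ (x ∈ C β ∧ ∃ e ∈ E, s < e ∧ e ≤ x) := by
    intro s hs
    obtain ⟨e, heE, hse, heβ⟩ := hβaccE.2 s hs
    obtain ⟨x, hxC, hex⟩ := hCβ.2.1 e heβ
    exact ⟨x, hse.trans_le hex, hCβ.1 x hxC, hxC, e, heE, hse, hex⟩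
  obtain ⟨α, hα0, hαβ, hacc, hc1, hc2⟩ := master (Cardinal.isSuccLimit_ord hμ.aleph0_le)
    (by rw [Cardinal.card_ord]; exact hμβ) hstep2 hβlim.pos
  have hαcof : α.cof = μ := by
    rw [Cardinal.card_ord] at hc2
    rw [hμ.cof_eq] at hc1
    exact le_antisymm hc2 hc1
  have haccC : IsAcc (C β) α := by
    refine ⟨hα0, fun γ hγ => ?_⟩
    obtain ⟨s, x, hγs, hsx, hxα, hxC, -⟩ := hacc γ hγ
    exact ⟨x, hxC, hγs.trans_lt hsx, hxα⟩
  have haccE : IsAcc E α := by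
    refine ⟨hα0, fun γ hγ => ?_⟩
    obtain ⟨s, x, hγs, hsx, hxα, -, e, heE, hse, hex⟩ := hacc γ hγ
    exact ⟨e, heE, lt_of_le_of_lt hγs hse, lt_of_le_of_lt hex hxα⟩
  have hαE : α ∈ E := hE.2.2 α (hαβ.trans hβκ) haccE
  have hCα : C α = C β ∩ Set.Iio α := hCoh.2 α β hβκ hαβ haccC
  obtain ⟨x, hxC, hαx⟩ := hCβ.2.1 α hαβ
  have hotp : otp (C α) < Ordinal.lift.{1,0} ν.ord := by
    rw [hCα, ← hβotp]
    exact otp_inter_Iio_lt hxC hαx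
  exact ⟨α, ⟨hαβ.trans hβκ, hαcof, hotp⟩, hαE⟩

/-- Let `μ < ν < κ` be infinite regular cardinals. If `C` is a `□(κ)`-sequence with
`T₀ = {α < κ | otp (C α) = ν}` stationary, then
`T₁ = {α ∈ S^κ_μ | otp (C α) < ν}` is also stationary. -/
theorem stmt_15 (μ ν κ : Cardinal) (hμ : μ.IsRegular) (hν : ν.IsRegular)
    (hκ : κ.IsRegular) (h₁ : μ < ν) (h₂ : ν < κ)
    (C : Ordinal → Set Ordinal) (hsq : SqSeq κ.ord C)
    (hT₀ : IsStationaryIn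
      {α | α < κ.ord ∧ Order.IsSuccLimit α ∧ otp (C α) = Ordinal.lift.{1,0} ν.ord} κ.ord) :
    IsStationaryIn
      {α | α < κ.ord ∧ α.cof = μ ∧ otp (C α) < Ordinal.lift.{1,0} ν.ord} κ.ord := by
  exact stmt_15' μ ν κ hμ hν hκ h₁ h₂ C hsq hT₀
end
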